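/- arXiv:math/0607734 — 10 statements merged into one kernel-verified Lean document; each statement's English description precedes it below -/
import Mathlib

section
/- Let q be an odd prime power and σ : F_q → F_q a permutation. Then for every j ∈ F_q, there exist distinct i, k ∈ F_q, both different from j, such that the three points (j, σ(j)), (i, σ(i)), (k, σ(k)) are collinear in F_q². That is, no point of the graph of σ is isolated in the hypergraph of collinear triples. -/
/-!
Suppose `(j, σ j)` lies on no collinear triple of the graph. Then the slopes
`(σ i - σ j) / (i - j)`, `i ≠ j`, are pairwise distinct and nonzero, so they run over all of `Fˣ`
and their product is `-1` by Wilson's theorem. On the other hand, numerators and denominators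
each run over `Fˣ`, so the product is `1`. Hence `-1 = 1`, which is impossible in odd
characteristic.
-/

open Finset

theorem FiniteField.prod_erase_zero_eq_neg_one {K : Type*} [Field K] [Fintype K] [DecidableEq K] :
    ∏ x ∈ univ.erase (0 : K), x = -1 := by
  have hunits : ∏ u : Kˣ, (u : K) = -1 := by
    simpa using congrArg (Units.coeHom K) (FiniteField.prod_univ_units_id_eq_neg_one (K := K))
  rw [prod_subtype (univ.erase 0) (p := (· ≠ 0)) (by simp), ← hunits]
  exact Fintype.prod_equiv unitsEquivNeZero.symm _ _ fun _ => rfl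

theorem prod_erase_sub_eq_prod_erase_zero {α R : Type*} [Fintype α] [DecidableEq α] [CommRing R]
    [Fintype R] [DecidableEq R] (e : α ≃ R) (a : α) :
    ∏ i ∈ univ.erase a, (e i - e a) = ∏ x ∈ univ.erase (0 : R), x :=
  prod_equiv (e.trans (Equiv.subRight (e a))) (by simp [sub_eq_zero]) (by simp)

theorem prod_slope_eq_one {K : Type*} [Field K] [Fintype K] [DecidableEq K] (e : Equiv.Perm K)
    (j : K) : ∏ i ∈ univ.erase j, slope e j i = 1 := by
  have hden : ∏ i ∈ univ.erase j, (i - j) = ∏ x ∈ univ.erase (0 : K), x :=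
    prod_erase_sub_eq_prod_erase_zero (Equiv.refl K) j
  simp only [slope_def_field]
  rw [prod_div_distrib, prod_erase_sub_eq_prod_erase_zero e, hden]
  exact div_self (prod_ne_zero_iff.2 fun x hx => ne_of_mem_erase hx)

theorem slope_eq_slope_iff {k : Type*} [Field k] (f : k → k) {i j l : k} (hi : i ≠ j)
    (hl : l ≠ j) : slope f j i = slope f j l ↔ (f i - f j) * (l - j) = (f l - f j) * (i - j) := by
  rw [slope_def_field, slope_def_field, div_eq_div_iff (sub_ne_zero.2 hi) (sub_ne_zero.2 hl)]

/-- No point of the graph of a permutation `σ` of a finite field of odd order is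
isolated in the hypergraph of collinear triples: every `(j, σ j)` lies in a
collinear triple of the graph. -/
theorem no_isolated_point {F : Type*} [Field F] [Fintype F]
    (hq : Odd (Fintype.card F)) (σ : Equiv.Perm F) (j : F) :
    ∃ i k : F, i ≠ k ∧ i ≠ j ∧ k ≠ j ∧
      (σ i - σ j) * (k - j) = (σ k - σ j) * (i - j) := by
  classical
  by_contra! h
  have hinj : Set.InjOn (slope σ j) (univ.erase j) := fun i hi k hk hik => by
    by_contra hne
    exact h i k hne (ne_of_mem_erase hi) (ne_of_mem_erase hk)
      ((slope_eq_slope_iff σ (ne_of_mem_erase hi) (ne_of_mem_erase hk)).1 hik)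
  have hmaps : Set.MapsTo (slope σ j) (univ.erase j) (univ.erase (0 : F) : Set F) := fun i hi => by
    simpa [slope_def_field, sub_eq_zero, σ.injective.eq_iff] using ne_of_mem_erase hi
  have hsurj := surjOn_of_injOn_of_card_le _ hmaps hinj (by simp)
  have hneg : ∏ i ∈ univ.erase j, slope σ j i = -1 := by
    rw [prod_nbij (f := slope σ j) (g := fun x => x) _ hmaps hinj hsurj fun _ _ => rfl]
    exact FiniteField.prod_erase_zero_eq_neg_one
  have hchar : ringChar F = 2 := neg_one_eq_one_iff.1 (hneg.symm.trans (prod_slope_eq_one σ j))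
  exact Nat.not_even_iff_odd.2 hq (Nat.even_iff.2 (FiniteField.even_card_of_char_two hchar))
end

section
/- Let q be an odd prime power and σ : F_q → F_q a permutation with σ(0) = 0. If the point (0,0) lies on no collinear triple of Γ_σ, then every line through the origin with slope m ∈ F_q* contains exactly two points of Γ_σ, and the product of the slopes m_{0i} = σ(i)/i over all i ≠ 0 equals both 1 and -1, a contradiction. Hence (0,0) participates in some collinear triple. -/
/-- If `σ` is a permutation of a finite field of odd order with `σ 0 = 0`, then
the point `(0,0)` participates in some collinear triple of the graph of `σ`
(slopes from the origin are `σ i / i`, so collinearity with the origin reads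
`σ i * k = σ k * i`). -/
theorem origin_in_collinear_triple {F : Type*} [Field F] [Fintype F]
    (hq : Odd (Fintype.card F)) (σ : Equiv.Perm F) (h0 : σ 0 = 0) :
    ∃ i k : F, i ≠ k ∧ i ≠ 0 ∧ k ≠ 0 ∧ σ i * k = σ k * i := by
  classical
  by_contra hc
  push_neg at hc
  set S : Finset F := Finset.univ.erase 0 with hS
  have hmemS : ∀ x : F, x ∈ S ↔ x ≠ 0 := by
    intro x; simp [hS]
  -- σ maps S bijectively to S
  have hσmem : ∀ i ∈ S, σ i ∈ S := by
    intro i hi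
    rw [hmemS] at hi ⊢
    intro h
    exact hi (σ.injective (by rw [h, h0]))
  have hprodσ : ∏ i ∈ S, σ i = ∏ i ∈ S, i := by
    apply Finset.prod_nbij (fun i => σ i) hσmem
    · intro a _ b _ h; exact σ.injective h
    · intro b hb
      refine ⟨σ.symm b, ?_, by simp⟩
      simp only [Finset.mem_coe, hmemS] at hb ⊢
      intro h
      apply hb
      rw [← σ.apply_symm_apply b, h, h0]
    · intros; rfl
  have hprodne : (∏ i ∈ S, i) ≠ 0 := by
    rw [Finset.prod_ne_zero_iff]
    intro i hi; exact (hmemS i).mp hi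
  -- the slope map g
  set g : F → F := fun i => σ i / i with hg
  have hgmem : ∀ i ∈ S, g i ∈ S := by
    intro i hi
    rw [hmemS] at hi ⊢
    have := (hmemS i).mp ((hmemS i).mpr hi) -- trivial
    exact div_ne_zero ((hmemS (σ i)).mp (hσmem i ((hmemS i).mpr hi))) hi
  have hginj : Set.InjOn g S := by
    intro a ha b hb hab
    rw [Finset.mem_coe, hmemS] at ha hb
    by_contra hne
    apply hc a b hne ha hb
    have : σ a / a = σ b / b := hab
    field_simp at this
    linear_combination this
  -- g's image of S is S
  have himg : Finset.image g S = S := by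
    apply Finset.eq_of_subset_of_card_le
    · intro x hx
      obtain ⟨i, hi, rfl⟩ := Finset.mem_image.mp hx
      exact hgmem i hi
    · rw [Finset.card_image_of_injOn hginj]
  -- product of slopes = 1
  have hprod1 : ∏ i ∈ S, g i = 1 := by
    have : ∏ i ∈ S, g i = (∏ i ∈ S, σ i) / ∏ i ∈ S, i := by
      rw [Finset.prod_div_distrib]
    rw [this, hprodσ, div_self hprodne]
  -- product over S equals -1 (Wilson)
  have hprodS : ∏ i ∈ S, i = -1 := by
    have hcoe : ∏ i ∈ S, i = ((∏ u : Fˣ, u : Fˣ) : F) := by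
      have : ((∏ u : Fˣ, u : Fˣ) : F) = ∏ u : Fˣ, (u : F) := by
        rw [← Units.coeHom_apply, map_prod]
        rfl
      rw [this]
      apply Finset.prod_nbij' (fun x => if h : x = 0 then 1 else Units.mk0 x h)
        (fun u => (u : F))
      · intro a _; exact Finset.mem_univ _
      · intro u _
        rw [hmemS]; exact u.ne_zero
      · intro a ha
        rw [dif_neg ((hmemS a).mp ha)]; rfl
      · intro u _
        rw [dif_neg u.ne_zero]
        ext; rfl
      · intro a ha
        rw [dif_neg ((hmemS a).mp ha)]; rfl
    rw [hcoe, FiniteField.prod_univ_units_id_eq_neg_one]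
    simp
  -- product of slopes = -1 as well
  have hprod2 : ∏ i ∈ S, g i = -1 := by
    have : ∏ i ∈ S, g i = ∏ x ∈ Finset.image g S, x := by
      rw [Finset.prod_image (fun a ha b hb h => hginj ha hb h)]
    rw [this, himg, hprodS]
  have h11 : (1 : F) = -1 := hprod1 ▸ hprod2
  have h2 : (2 : F) = 0 := by linear_combination h11
  have hchar : ringChar F = 2 := by
    have hdvd : ringChar F ∣ 2 := by
      rwa [← CharP.cast_eq_zero_iff F (ringChar F) 2]
    rcases (Nat.dvd_prime Nat.prime_two).mp hdvd with h | h
    · exact absurd h CharP.ringChar_ne_one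
    · exact h
  have := FiniteField.even_card_of_char_two hchar
  rw [Nat.odd_iff] at hq
  omega
end

section
/- Let q be odd and σ : F_q → F_q a permutation. If x = (j, σ(j)) ∈ Γ_σ is lonely (belongs to exactly one collinear triple), with m_j the slope of its unique collinear triple and m_j^⊥ the unique slope whose line through x meets Γ_σ only in x, then m_j^⊥ = -m_j. -/
/-- Number of points of the graph of `σ` on the line through `x` of slope `m`. -/
def lineCount {F : Type*} [Field F] [Fintype F] [DecidableEq F]
    (σ : F → F) (x : F × F) (m : F) : ℕ :=
  (Finset.univ.filter (fun i : F => σ i - x.2 = m * (i - x.1))).card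

/-- The collinear triples of the graph of `σ` containing the point `(j, σ j)`,
encoded by the two-element sets of other abscissae. -/
def triplesThrough {F : Type*} [Field F] [Fintype F] [DecidableEq F]
    (σ : F → F) (j : F) : Finset (Finset F) :=
  Finset.univ.filter (fun s : Finset F => s.card = 2 ∧ j ∉ s ∧
    ∀ i ∈ s, ∀ k ∈ s, (σ i - σ j) * (k - j) = (σ k - σ j) * (i - j))

open Finset

/-- For a permutation `σ` of a finite field of odd order and a lonely point
`x = (j, σ j)`: if `mj` is the slope of its unique collinear triple and `mp` is the
unique slope whose line through `x` meets the graph only in `x`, then `mp = -mj`. -/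
theorem lonely_perp_slope {F : Type*} [Field F] [Fintype F] [DecidableEq F]
    (hq : Odd (Fintype.card F)) (σ : F → F) (hσ : Function.Bijective σ) (j : F)
    (hlone : (triplesThrough σ j).card = 1)
    (mj mp : F) (hmj : mj ≠ 0) (h3 : lineCount σ (j, σ j) mj = 3)
    (hmp : mp ≠ 0) (h1 : lineCount σ (j, σ j) mp = 1) :
    mp = -mj := by
  classical
  have hinj := hσ.injective
  set f : F → F := fun i => (σ i - σ j) / (i - j) with hf
  set S : Finset F := Finset.univ.erase j with hSdef
  have hmemS : ∀ i : F, i ∈ S ↔ i ≠ j := by intro i; simp [hSdef]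
  have hsubne : ∀ i : F, i ≠ j → i - j ≠ 0 := fun i hi => sub_ne_zero.mpr hi
  have hσne : ∀ i : F, i ≠ j → σ i - σ j ≠ 0 := fun i hi =>
    sub_ne_zero.mpr (fun h => hi (hinj h))
  have hfne : ∀ i ∈ S, f i ≠ 0 := by
    intro i hi
    have hij := (hmemS i).mp hi
    exact div_ne_zero (hσne i hij) (hsubne i hij)
  set c : F → ℕ := fun m => (S.filter fun i => f i = m).card with hc
  have hline : ∀ m : F, lineCount σ (j, σ j) m = c m + 1 := by
    intro m
    have hkey : (Finset.univ.filter fun i : F => σ i - σ j = m * (i - j))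
        = insert j (S.filter fun i => f i = m) := by
      ext i
      by_cases hij : i = j
      · subst hij; simp
      · have h2 : f i = m ↔ σ i - σ j = m * (i - j) := by
          rw [hf]; exact div_eq_iff (hsubne i hij)
        simp only [mem_filter, mem_insert, mem_univ, true_and, hij, false_or, hmemS]
        tauto
    have hjnot : j ∉ S.filter fun i => f i = m := by
      intro h
      exact ((hmemS j).mp (mem_filter.mp h).1) rfl
    rw [lineCount, hkey, card_insert_of_notMem hjnot]
  have hcmj : c mj = 2 := by have := hline mj; rw [h3] at this; omega
  have hcmp : c mp = 0 := by have := hline mp; rw [h1] at this; omega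
  -- pairs with equal slopes give collinear triples
  have hpair : ∀ a b : F, a ∈ S → b ∈ S → a ≠ b → f a = f b →
      ({a, b} : Finset F) ∈ triplesThrough σ j := by
    intro a b ha hb hab hfab
    have haj := (hmemS a).mp ha
    have hbj := (hmemS b).mp hb
    have hcross : (σ a - σ j) * (b - j) = (σ b - σ j) * (a - j) := by
      rw [hf] at hfab
      rwa [div_eq_div_iff (hsubne a haj) (hsubne b hbj)] at hfab
    rw [triplesThrough, mem_filter]
    refine ⟨mem_univ _, ?_, ?_, ?_⟩
    · rw [card_insert_of_notMem (by simp [hab]), card_singleton]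
    · simp only [mem_insert, mem_singleton]
      rintro (rfl | rfl)
      · exact haj rfl
      · exact hbj rfl
    · intro i hi k hk
      simp only [mem_insert, mem_singleton] at hi hk
      rcases hi with rfl | rfl <;> rcases hk with rfl | rfl
      · rfl
      · exact hcross
      · exact hcross.symm
      · rfl
  obtain ⟨a, b, hab, hfab⟩ := Finset.card_eq_two.mp hcmj
  have ha : a ∈ S ∧ f a = mj := by
    have : a ∈ S.filter fun i => f i = mj := by rw [hfab]; simp
    exact mem_filter.mp this
  have hb : b ∈ S ∧ f b = mj := by
    have : b ∈ S.filter fun i => f i = mj := by rw [hfab]; simp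
    exact mem_filter.mp this
  have hle1 : ∀ m : F, m ≠ mj → c m ≤ 1 := by
    intro m hm
    by_contra h
    push_neg at h
    obtain ⟨x, hx, y, hy, hxy⟩ := Finset.one_lt_card.mp h
    have hx' := mem_filter.mp hx
    have hy' := mem_filter.mp hy
    have t1 := hpair a b ha.1 hb.1 hab (ha.2.trans hb.2.symm)
    have t2 := hpair x y hx'.1 hy'.1 hxy (hx'.2.trans hy'.2.symm)
    obtain ⟨t, ht⟩ := Finset.card_eq_one.mp hlone
    rw [ht, mem_singleton] at t1 t2
    have heq : ({x, y} : Finset F) = {a, b} := t2.trans t1.symm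
    have hxab : x ∈ ({a, b} : Finset F) := by rw [← heq]; simp
    have : f x = mj := by
      simp only [mem_insert, mem_singleton] at hxab
      rcases hxab with rfl | rfl
      · exact ha.2
      · exact hb.2
    rw [hx'.2] at this
    exact hm this
  have hc0 : c 0 = 0 := by
    rw [hc]
    simp only [Finset.card_eq_zero, Finset.filter_eq_empty_iff]
    exact hfne
  have hScard : S.card = Fintype.card F - 1 := by
    rw [hSdef, card_erase_of_mem (mem_univ j), card_univ]
  have hsum : ∑ m : F, c m = Fintype.card F - 1 := by
    rw [← hScard]
    exact (Finset.card_eq_sum_card_fiberwise (fun x _ => mem_univ (f x))).symm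
  have hmjmp : mj ≠ mp := fun h => by rw [h, hcmp] at hcmj; omega
  set U0 : Finset F := Finset.univ.erase 0 with hU0
  have hmjU : mj ∈ U0 := mem_erase.mpr ⟨hmj, mem_univ _⟩
  have hmpU : mp ∈ U0.erase mj := mem_erase.mpr ⟨hmjmp.symm, mem_erase.mpr ⟨hmp, mem_univ _⟩⟩
  set T : Finset F := (U0.erase mj).erase mp with hT
  have hs1 : (0:F) ^ c 0 * ∏ m ∈ U0, m ^ c m = ∏ m : F, m ^ c m :=
    Finset.mul_prod_erase _ (fun m => m ^ c m) (mem_univ (0:F))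
  have hcard3 : 3 ≤ Fintype.card F := by
    have h2 : c mj ≤ S.card := Finset.card_filter_le _ _
    have hpos : 0 < Fintype.card F := Fintype.card_pos
    omega
  have hTcard : T.card = Fintype.card F - 3 := by
    rw [hT, card_erase_of_mem hmpU, card_erase_of_mem hmjU,
      card_erase_of_mem (mem_univ (0:F)), card_univ]
    omega
  have hss1 : c 0 + ∑ m ∈ U0, c m = ∑ m : F, c m := Finset.add_sum_erase _ c (mem_univ (0:F))
  have hss2 : c mj + ∑ m ∈ U0.erase mj, c m = ∑ m ∈ U0, c m := Finset.add_sum_erase _ c hmjU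
  have hss3 : c mp + ∑ m ∈ T, c m = ∑ m ∈ U0.erase mj, c m := Finset.add_sum_erase _ c hmpU
  have hsumT : ∑ m ∈ T, c m = ∑ m ∈ T, 1 := by
    rw [Finset.sum_const, smul_eq_mul, mul_one, hTcard]
    omega
  have hmne : ∀ m ∈ T, m ≠ mj := fun m hm => (mem_erase.mp (mem_erase.mp hm).2).1
  have hone : ∀ m ∈ T, c m = 1 :=
    (Finset.sum_eq_sum_iff_of_le (fun m hm => hle1 m (hmne m hm))).mp hsumT
  -- product of slopes
  have hprodP : ∏ i ∈ S, f i = ∏ m : F, m ^ c m := by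
    rw [← Finset.prod_fiberwise_of_maps_to (fun x _ => mem_univ (f x)) f]
    refine Finset.prod_congr rfl fun m _ => ?_
    rw [Finset.prod_congr rfl (fun i hi => (mem_filter.mp hi).2), prod_const]
  have hQ1 : ∏ i ∈ S, (i - j) = ∏ u ∈ U0, u := by
    refine Finset.prod_bij' (fun i _ => i - j) (fun u _ => u + j) ?_ ?_ ?_ ?_ ?_
    · intro i hi
      exact mem_erase.mpr ⟨hsubne i ((hmemS i).mp hi), mem_univ _⟩
    · intro u hu
      refine (hmemS _).mpr fun h => (mem_erase.mp hu).1 ?_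
      have h' : u + j = j := h
      linear_combination h'
    · intro i _; ring
    · intro u _; ring
    · intro i _; rfl
  have e := Equiv.ofBijective σ hσ
  have hQ2 : ∏ i ∈ S, (σ i - σ j) = ∏ u ∈ U0, u := by
    refine Finset.prod_bij' (fun i _ => σ i - σ j)
      (fun u _ => (Equiv.ofBijective σ hσ).symm (u + σ j)) ?_ ?_ ?_ ?_ ?_
    · intro i hi
      exact mem_erase.mpr ⟨hσne i ((hmemS i).mp hi), mem_univ _⟩
    · intro u hu
      refine (hmemS _).mpr fun h => (mem_erase.mp hu).1 ?_
      have h' : (Equiv.ofBijective σ hσ).symm (u + σ j) = j := h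
      have h3 := congrArg (Equiv.ofBijective σ hσ) h'
      rw [Equiv.apply_symm_apply] at h3
      have h4 : u + σ j = σ j := h3
      linear_combination h4
    · intro i _
      show (Equiv.ofBijective σ hσ).symm (σ i - σ j + σ j) = i
      have h5 : σ i - σ j + σ j = (Equiv.ofBijective σ hσ) i := by
        show σ i - σ j + σ j = σ i; ring
      rw [h5, Equiv.symm_apply_apply]
    · intro u _
      show σ ((Equiv.ofBijective σ hσ).symm (u + σ j)) - σ j = u
      have h6 : σ ((Equiv.ofBijective σ hσ).symm (u + σ j)) = u + σ j :=
        (Equiv.ofBijective σ hσ).apply_symm_apply (u + σ j)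
      rw [h6]; ring
    · intro i _; rfl
  have hQne : (∏ u ∈ U0, u) ≠ 0 :=
    Finset.prod_ne_zero_iff.mpr (fun u hu => (mem_erase.mp hu).1)
  have hP1 : ∏ i ∈ S, f i = 1 := by
    rw [hf]
    rw [Finset.prod_div_distrib, hQ1, hQ2, div_self hQne]
  -- Wilson's theorem: product of nonzero elements is -1
  have hQw : ∏ u ∈ U0, u = -1 := by
    have hconv : ∏ u ∈ U0, u = ∏ x : Fˣ, (x : F) := by
      refine (Finset.prod_bij (fun (x : Fˣ) _ => (x : F)) ?_ ?_ ?_ ?_).symm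
      · intro x _
        exact mem_erase.mpr ⟨Units.ne_zero x, mem_univ _⟩
      · intro x₁ _ x₂ _ h
        exact Units.ext h
      · intro u hu
        exact ⟨Units.mk0 u (mem_erase.mp hu).1, mem_univ _, rfl⟩
      · intro x _; rfl
    have hmap : ((∏ x : Fˣ, x : Fˣ) : F) = ∏ x : Fˣ, (x : F) :=
      map_prod (Units.coeHom F) _ _
    rw [hconv, ← hmap, FiniteField.prod_univ_units_id_eq_neg_one, Units.val_neg, Units.val_one]
  -- assemble
  have hProd1 : ∏ m : F, m ^ c m = 1 := hprodP ▸ hP1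
  have hp2 : mj ^ c mj * ∏ m ∈ U0.erase mj, m ^ c m = ∏ m ∈ U0, m ^ c m :=
    Finset.mul_prod_erase _ (fun m => m ^ c m) hmjU
  have hp3 : mp ^ c mp * ∏ m ∈ T, m ^ c m = ∏ m ∈ U0.erase mj, m ^ c m :=
    Finset.mul_prod_erase _ (fun m => m ^ c m) hmpU
  have hpT : ∏ m ∈ T, m ^ c m = ∏ m ∈ T, m :=
    Finset.prod_congr rfl fun m hm => by rw [hone m hm, pow_one]
  have hq2 : mj * ∏ m ∈ U0.erase mj, m = ∏ m ∈ U0, m :=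
    Finset.mul_prod_erase _ (fun m => m) hmjU
  have hq3 : mp * ∏ m ∈ T, m = ∏ m ∈ U0.erase mj, m :=
    Finset.mul_prod_erase _ (fun m => m) hmpU
  -- eq1 : mj^2 * ∏_T m = 1
  have eq1 : mj ^ 2 * ∏ m ∈ T, m = 1 := by
    have h0 : (0:F) ^ c 0 = 1 := by rw [hc0, pow_zero]
    rw [h0, one_mul] at hs1
    rw [hcmp, pow_zero, one_mul, hpT] at hp3
    rw [hcmj, ← hp3] at hp2
    rw [← hs1, ← hp2] at hProd1
    exact hProd1
  have eq2 : mj * (mp * ∏ m ∈ T, m) = -1 := by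
    rw [hq3, hq2, hQw]
  calc mp = mp * (mj ^ 2 * ∏ m ∈ T, m) := by rw [eq1, mul_one]
    _ = mj * (mj * (mp * ∏ m ∈ T, m)) := by ring
    _ = mj * (-1) := by rw [eq2]
    _ = -mj := by ring
end

section
/- Let H be a connected 3-or-more-uniform hypergraph on t vertices with at least 2 edges, each edge of size at least 3, such that the edges can be ordered e_1,…,e_k with each e_j (j ≥ 2) intersecting some earlier edge. Define ‖H‖ = Σ_{e ∈ H} (|e|-1)(|e|-2)/2. Then ‖H‖ ≥ 2t/5, where t ≤ Σ|e_j| - (k-1). -/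
/-!
Adding the edges in the given order, each edge after the first meets the union of the earlier
ones, so it brings at most `|e| - 1` new vertices: `t + k ≤ Σ |e| + 1`. On the other hand every
edge of size `x ≥ 3` has weight `(x - 1)(x - 2)/2 ≥ (2x - 1)/5`, with equality at `x = 3`.
Summing, `‖H‖ ≥ (2 Σ |e| - k)/5 ≥ (2t + k - 2)/5 ≥ 2t/5` as soon as `k ≥ 2`.
-/

open Finset

theorem Finset.card_union_add_one_le_of_nonempty_inter {α : Type*} [DecidableEq α]
    {s t : Finset α} (h : (s ∩ t).Nonempty) : #(s ∪ t) + 1 ≤ #s + #t := by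
  have := card_union_add_card_inter s t
  have := h.card_pos
  omega

theorem Finset.card_biUnion_add_card_le_sum_card_add_one {ι V : Type*} [LinearOrder ι]
    [DecidableEq V] (e : ι → Finset V) (s : Finset ι)
    (hconn : ∀ j ∈ s, ∀ i ∈ s, i < j → ∃ i' ∈ s, i' < j ∧ (e i' ∩ e j).Nonempty) :
    #(s.biUnion e) + #s ≤ ∑ i ∈ s, #(e i) + 1 := by
  induction s using Finset.induction_on_max with
  | empty => simp
  | insert a s hlt ih =>
    have ha : a ∉ s := fun has => lt_irrefl a (hlt a has)
    have hconn_s : ∀ j ∈ s, ∀ i ∈ s, i < j → ∃ i' ∈ s, i' < j ∧ (e i' ∩ e j).Nonempty := by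
      intro j hj i hi hij
      obtain ⟨i', hi', hi'j, hmeet⟩ := hconn j (mem_insert_of_mem hj) i (mem_insert_of_mem hi) hij
      rcases mem_insert.1 hi' with rfl | hi'
      · exact (lt_irrefl _ (hi'j.trans (hlt j hj))).elim
      · exact ⟨i', hi', hi'j, hmeet⟩
    rw [biUnion_insert, sum_insert ha, card_insert_of_notMem ha]
    have ih := ih hconn_s
    rcases s.eq_empty_or_nonempty with rfl | ⟨x, hx⟩
    · simp
    obtain ⟨i, hi_ins, hia, hmeet⟩ := hconn a (mem_insert_self a s) x (mem_insert_of_mem hx) (hlt x hx)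
    have hi : i ∈ s := (mem_insert.1 hi_ins).resolve_left hia.ne
    have hmeet : (e a ∩ s.biUnion e).Nonempty :=
      hmeet.mono fun v hv => mem_inter.2 ⟨(mem_inter.1 hv).2, mem_biUnion.2 ⟨i, hi, (mem_inter.1 hv).1⟩⟩
    have := card_union_add_one_le_of_nonempty_inter hmeet
    omega

theorem two_mul_sub_one_div_five_le {K : Type*} [Field K] [LinearOrder K] [IsStrictOrderedRing K]
    {x : K} (hx : 3 ≤ x) : (2 * x - 1) / 5 ≤ (x - 1) * (x - 2) / 2 := by
  nlinarith

theorem hypergraph_norm_ge_general {V : Type*} [DecidableEq V] (k : ℕ) (hk : 2 ≤ k)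
    (e : Fin k → Finset V)
    (hsize : ∀ i, 3 ≤ (e i).card)
    (hconn : ∀ j : Fin k, 0 < (j : ℕ) → ∃ i : Fin k, (i : ℕ) < (j : ℕ) ∧ (e i ∩ e j).Nonempty) :
    (Finset.univ.biUnion e).card ≤ (∑ i : Fin k, (e i).card) - (k - 1) ∧
    (2 : ℚ) * (Finset.univ.biUnion e).card / 5 ≤
      ∑ i : Fin k, (((e i).card : ℚ) - 1) * (((e i).card : ℚ) - 2) / 2 := by
  have hcount : #(univ.biUnion e) + k ≤ ∑ i, #(e i) + 1 := by
    simpa using card_biUnion_add_card_le_sum_card_add_one e univ fun j _ i _ hij =>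
      (hconn j ((Nat.zero_le _).trans_lt hij)).imp fun i' h => ⟨mem_univ _, h⟩
  refine ⟨by omega, ?_⟩
  have hcountℚ : (#(univ.biUnion e) : ℚ) + k ≤ ∑ i, (#(e i) : ℚ) + 1 := by exact_mod_cast hcount
  have hweight : ∑ i, (2 * (#(e i) : ℚ) - 1) / 5 ≤
      ∑ i, ((#(e i) : ℚ) - 1) * ((#(e i) : ℚ) - 2) / 2 :=
    sum_le_sum fun i _ => two_mul_sub_one_div_five_le (by exact_mod_cast hsize i)
  have hsum : ∑ i, (2 * (#(e i) : ℚ) - 1) / 5 = (2 * ∑ i, (#(e i) : ℚ) - k) / 5 := by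
    simp [← sum_div, sum_sub_distrib, ← mul_sum]
  have hkℚ : (2 : ℚ) ≤ k := by exact_mod_cast hk
  linarith

/-- For a connected hypergraph `H` on `t` vertices with `k ≥ 2` distinct edges, each
of size at least 3, whose edges can be ordered so that each edge after the first
meets an earlier one: writing `‖H‖ = Σ_e (|e|-1)(|e|-2)/2`, we have
`t ≤ Σ|e| - (k-1)` and `‖H‖ ≥ 2t/5`. -/
theorem hypergraph_norm_ge {V : Type*} [DecidableEq V] (k : ℕ) (hk : 2 ≤ k)
    (e : Fin k → Finset V) (he : Function.Injective e)
    (hsize : ∀ i, 3 ≤ (e i).card)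
    (hconn : ∀ j : Fin k, 0 < (j : ℕ) → ∃ i : Fin k, (i : ℕ) < (j : ℕ) ∧ (e i ∩ e j).Nonempty) :
    (Finset.univ.biUnion e).card ≤ (∑ i : Fin k, (e i).card) - (k - 1) ∧
    (2 : ℚ) * (Finset.univ.biUnion e).card / 5 ≤
      ∑ i : Fin k, (((e i).card : ℚ) - 1) * (((e i).card : ℚ) - 2) / 2 :=
  hypergraph_norm_ge_general k hk e hsize hconn
end

section
/- Let q be odd, σ : F_q → F_q a permutation, and x ∈ Γ_σ. Define ‖x‖ = Σ φ(k) where the sum is over all maximal collinear subsets of Γ_σ containing x of size k ≥ 3, and φ(k) = (k-1)(k-2)/(2k). If there are B slopes m ∈ F_q* with ℓ(x,m) ∩ Γ_σ = {x}, then ‖x‖ ≥ B/3. -/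
open Finset

theorem sum_sub_two_filter_eq_card_filter_eq_one {ι : Type*} (s : Finset ι) (c : ι → ℕ)
    (hc : ∀ i ∈ s, 1 ≤ c i) (hsum : ∑ i ∈ s, c i = 2 * #s) :
    ∑ i ∈ s with 3 ≤ c i, ((c i : ℝ) - 2) = #{i ∈ s | c i = 1} := by
  have hzero : ∑ i ∈ s, ((c i : ℝ) - 2) = 0 := by
    rw [sum_sub_distrib, ← Nat.cast_sum, hsum, sum_const, nsmul_eq_mul]
    push_cast
    ring
  have hsplit : ∀ i ∈ s, (c i : ℝ) - 2 =
      (if 3 ≤ c i then (c i : ℝ) - 2 else 0) - (if c i = 1 then 1 else 0) := by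
    intro i hi
    have := hc i hi
    rcases (by omega : c i = 1 ∨ c i = 2 ∨ 3 ≤ c i) with h | h | h
    · rw [h]; norm_num
    · rw [h]; norm_num
    · rw [if_pos h, if_neg (by omega), sub_zero]
  rw [sum_congr rfl hsplit, sum_sub_distrib, ← sum_filter, ← sum_filter, sum_const,
    nsmul_one] at hzero
  linarith

theorem div_three_le_sub_one_mul_sub_two_div {k : ℝ} (hk : 3 ≤ k) :
    (k - 2) / 3 ≤ (k - 1) * (k - 2) / (2 * k) := by
  rw [div_le_div_iff₀ (by norm_num) (by linarith)]
  nlinarith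

section Graph

variable {F : Type*} [Field F] [Fintype F] [DecidableEq F] {σ : F → F}

theorem one_le_lineCount (j m : F) : 1 ≤ lineCount σ (j, σ j) m := by
  rw [lineCount, one_le_card]
  exact ⟨j, by simp⟩

theorem filter_slope_eq_singleton (hσ : σ.Injective) {i j : F} (hij : i ≠ j) :
    {m ∈ univ.erase (0 : F) | σ i - σ j = m * (i - j)} = {(σ i - σ j) / (i - j)} := by
  have hi : i - j ≠ 0 := sub_ne_zero.mpr hij
  have hσi : σ i - σ j ≠ 0 := sub_ne_zero.mpr (hσ.ne hij)
  ext m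
  simp only [mem_filter, mem_erase, mem_univ, and_true, mem_singleton]
  constructor
  · rintro ⟨-, h⟩
    rw [h, mul_div_cancel_right₀ _ hi]
  · rintro rfl
    exact ⟨div_ne_zero hσi hi, (div_mul_cancel₀ _ hi).symm⟩

theorem sum_lineCount_erase_zero (hσ : σ.Injective) (j : F) :
    ∑ m ∈ univ.erase 0, lineCount σ (j, σ j) m = 2 * #(univ.erase (0 : F)) := by
  have hslopes : ∀ i, #{m ∈ univ.erase (0 : F) | σ i - σ j = m * (i - j)} =
      if i = j then #(univ.erase (0 : F)) else 1 := by
    intro i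
    split_ifs with h
    · subst h; simp
    · rw [filter_slope_eq_singleton hσ h, card_singleton]
  calc ∑ m ∈ univ.erase 0, lineCount σ (j, σ j) m
      = ∑ i, #{m ∈ univ.erase (0 : F) | σ i - σ j = m * (i - j)} := by
        simp only [lineCount, card_filter]
        exact sum_comm
    _ = #(univ.erase (0 : F)) + #(univ.erase j) := by
        rw [sum_congr rfl fun i _ => hslopes i, ← add_sum_erase _ _ (mem_univ j), if_pos rfl,
          sum_congr rfl fun i hi => if_neg (ne_of_mem_erase hi), sum_const, smul_eq_mul, mul_one]
    _ = 2 * #(univ.erase (0 : F)) := by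
        rw [card_erase_of_mem (mem_univ _), card_erase_of_mem (mem_univ _)]
        ring

end Graph

theorem point_norm_ge_general {F : Type*} [Field F] [Fintype F] [DecidableEq F]
    (σ : F → F) (hσ : Function.Bijective σ) (j : F)
    (B : ℕ)
    (hB : B = (Finset.univ.filter (fun m : F => m ≠ 0 ∧ lineCount σ (j, σ j) m = 1)).card) :
    (B : ℝ) / 3 ≤
      ∑ m ∈ Finset.univ.filter (fun m : F => m ≠ 0 ∧ 3 ≤ lineCount σ (j, σ j) m),
        ((lineCount σ (j, σ j) m : ℝ) - 1) * ((lineCount σ (j, σ j) m : ℝ) - 2) /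
          (2 * (lineCount σ (j, σ j) m : ℝ)) := by
  set c := lineCount σ (j, σ j)
  have hexcess : ∑ m with m ≠ 0 ∧ 3 ≤ c m, ((c m : ℝ) - 2) = B := by
    have := sum_sub_two_filter_eq_card_filter_eq_one _ c (fun m _ => one_le_lineCount j m)
      (sum_lineCount_erase_zero hσ.injective j)
    rwa [← filter_ne', filter_filter, filter_filter, ← hB] at this
  rw [← hexcess, sum_div]
  refine sum_le_sum fun m hm => div_three_le_sub_one_mul_sub_two_div ?_
  exact_mod_cast (mem_filter.mp hm).2.2

/-- For `x = (j, σ j)` in the graph of a permutation `σ`, define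
`‖x‖ = Σ φ(k)` over the maximal collinear subsets of the graph through `x` of size
`k ≥ 3` (these are the intersections `ℓ(x,m) ∩ Γ_σ`), where `φ k = (k-1)(k-2)/(2k)`.
If there are `B` nonzero slopes `m` with `ℓ(x,m) ∩ Γ_σ = {x}`, then `‖x‖ ≥ B/3`. -/
theorem point_norm_ge {F : Type*} [Field F] [Fintype F] [DecidableEq F]
    (hq : Odd (Fintype.card F)) (σ : F → F) (hσ : Function.Bijective σ) (j : F)
    (B : ℕ)
    (hB : B = (Finset.univ.filter (fun m : F => m ≠ 0 ∧ lineCount σ (j, σ j) m = 1)).card) :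
    (B : ℝ) / 3 ≤
      ∑ m ∈ Finset.univ.filter (fun m : F => m ≠ 0 ∧ 3 ≤ lineCount σ (j, σ j) m),
        ((lineCount σ (j, σ j) m : ℝ) - 1) * ((lineCount σ (j, σ j) m : ℝ) - 2) /
          (2 * (lineCount σ (j, σ j) m : ℝ)) :=
  point_norm_ge_general σ hσ j B hB
end

section
/- Let q be odd and σ : F_q → F_q a permutation. Define ‖Γ_σ‖ = Σ over all maximal collinear subsets L of Γ_σ of (|L|-1)(|L|-2)/2. Then ‖Γ_σ‖ ≥ (5q-1)/14. In particular, the number of collinear triples in Γ_σ is at least (5q-1)/14. -/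
/-!
Fix a point `p` of the graph. Its slopes `(σ x - σ p) / (x - p)`, `x ≠ p`, are nonzero and, by
Wilson's theorem applied to numerators and denominators, multiply to `(-1) / (-1) = 1`, whereas the
nonzero elements of `F` multiply to `-1 ≠ 1` since `q` is odd. So at least one nonzero slope is
missing at `p`; and if exactly one slope `m` is missing, the product forces the slope `-m` to occur
twice, i.e. `p` lies on a line of slope `-m` carrying three points of the graph.

Counting point–slope incidences line by line bounds the total number of missing slopes by
`3 ‖Γ_σ‖`. By parity, a slope without lines of three or more points has a point alone on its line
of that slope; if neither `m` nor `-m` has such rich lines, this point misses at least two slopes.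
The slopes `m` for which `m` or `-m` is rich number at most `2 ‖Γ_σ‖`. Together these give
`3 q ≤ 8 ‖Γ_σ‖ + 1`, which implies `(5 q - 1) / 14 ≤ ‖Γ_σ‖` as `q ≥ 3`. Finally a line with `k`
points carries `C(k, 3) ≥ C(k - 1, 2)` collinear triples, and distinct lines share no triple.
-/

open Finset

/-- Number of `i` with `σ i = m * i + b`, i.e. the number of points of the graph of
`σ` on the line `y = m x + b`. -/
def lineSize {F : Type*} [Field F] [Fintype F] [DecidableEq F]
    (σ : F → F) (m b : F) : ℕ :=
  (Finset.univ.filter (fun i : F => σ i = m * i + b)).card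

/-- A finite set `s` of abscissae gives collinear points `(i, σ i)` of the graph. -/
def Collin {F : Type*} [Field F] (σ : F → F) (s : Finset F) : Prop :=
  ∀ i ∈ s, ∀ k ∈ s, ∀ l ∈ s, (σ k - σ i) * (l - i) = (σ l - σ i) * (k - i)

instance {F : Type*} [Field F] [DecidableEq F] (σ : F → F) (s : Finset F) :
    Decidable (Collin σ s) := by unfold Collin; infer_instance

namespace GraphCollinearity

open scoped Pointwise

theorem exists_prod_pow_eq_of_sum_eq_one {ι M : Type*} [DecidableEq ι] [CommMonoid M]
    {s : Finset ι} {d : ι → ℕ} (g : ι → M) (h : ∑ i ∈ s, d i = 1) :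
    ∃ j ∈ s, d j = 1 ∧ ∏ i ∈ s, g i ^ d i = g j := by
  obtain ⟨j, hj, hdj⟩ := exists_ne_zero_of_sum_ne_zero (h ▸ one_ne_zero)
  have hsplit := add_sum_erase s d hj
  have hrest : ∀ i ∈ s.erase j, d i = 0 := sum_eq_zero_iff.1 (by omega)
  have hd : d j = 1 := by omega
  refine ⟨j, hj, hd, ?_⟩
  rw [prod_eq_single_of_mem j hj fun i hi hij => by
    rw [hrest i (mem_erase.2 ⟨hij, hi⟩), pow_zero], hd, pow_one]

-- A line with `k` points accounts for `k (k - 1)` point-slope incidences and, if `k = 1`, for one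
-- missing slope at its point.
theorem mul_sub_one_add_ite_le (k : ℕ) :
    k * (k - 1 + if k = 1 then 1 else 0) ≤ 3 * (k - 1).choose 2 + k := by
  rcases k with _ | _ | _ | n
  · simp
  · simp
  · simp
  · have h := Nat.add_one_mul_choose_eq (n + 1) 1
    simp only [Nat.choose_one_right] at h
    rw [if_neg (by omega), add_zero, show n + 3 - 1 = n + 2 from rfl]
    nlinarith

theorem choose_sub_one_two_le_choose_three (k : ℕ) : (k - 1).choose 2 ≤ k.choose 3 := by
  rcases k with _ | n
  · rfl
  · rw [Nat.add_sub_cancel, Nat.choose_succ_succ]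
    exact Nat.le_add_right _ _

variable {F : Type*} [Field F] {σ : F → F}

def intercept (σ : F → F) (m i : F) : F := σ i - m * i

theorem intercept_eq_intercept_iff_slope_eq {m p x : F} (hx : x ≠ p) :
    intercept σ m x = intercept σ m p ↔ slope σ p x = m := by
  rw [slope_def_field, div_eq_iff (sub_ne_zero.2 hx), intercept, intercept]
  constructor <;> intro h <;> linear_combination h

theorem line_eq_of_ne {m b m' b' i j : F} (hij : i ≠ j)
    (hi : σ i = m * i + b) (hj : σ j = m * j + b)
    (hi' : σ i = m' * i + b') (hj' : σ j = m' * j + b') : (m, b) = (m', b') := by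
  have hm : (m - m') * (i - j) = 0 := by linear_combination (hi' - hj') - (hi - hj)
  obtain rfl : m = m' := sub_eq_zero.1 ((mul_eq_zero.1 hm).resolve_right (sub_ne_zero.2 hij))
  rw [add_left_cancel (hi.symm.trans hi')]

variable [Fintype F]

theorem neg_one_ne_one_of_odd_card (hq : Odd (Fintype.card F)) : (-1 : F) ≠ 1 :=
  Ring.neg_one_ne_one_of_char_ne_two <| by
    rw [Ne, FiniteField.even_card_iff_char_two, Nat.odd_iff.1 hq]
    decide

variable [DecidableEq F]

theorem prod_univ_erase_zero_eq_neg_one : ∏ x ∈ univ.erase (0 : F), x = -1 := by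
  have h : univ.erase (0 : F) = univ.map ⟨Units.val, Units.val_injective⟩ := by
    ext x
    simpa [IsUnit] using isUnit_iff_ne_zero.symm
  rw [h, prod_map]
  simpa using congrArg Units.val (FiniteField.prod_univ_units_id_eq_neg_one (K := F))

theorem prod_univ_erase_sub_eq_neg_one (hσ : Function.Bijective σ) (p : F) :
    ∏ x ∈ univ.erase p, (σ x - σ p) = -1 := by
  let e : F ≃ F := (Equiv.ofBijective σ hσ).trans (Equiv.subRight (σ p))
  have h : (univ.erase p).map e.toEmbedding = univ.erase 0 := by
    rw [map_erase, map_univ_equiv]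
    simp [e]
  rw [← prod_univ_erase_zero_eq_neg_one, ← h, prod_map]
  rfl

def slopeCount (σ : F → F) (p s : F) : ℕ := #{x ∈ univ.erase p | slope σ p x = s}

def missingSlopes (σ : F → F) (p : F) : Finset F := {s ∈ univ.erase 0 | slopeCount σ p s = 0}

def slopeNorm (σ : F → F) (m : F) : ℕ := ∑ b, (lineSize σ m b - 1).choose 2

-- `‖Γ_σ‖`: vertical lines meet the graph only once, so only the lines `y = m x + b` contribute.
def graphNorm (σ : F → F) : ℕ := ∑ m, slopeNorm σ m

theorem lineSize_eq_card_intercept (σ : F → F) (m b : F) :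
    lineSize σ m b = #{i | intercept σ m i = b} := by
  simp only [lineSize, intercept, sub_eq_iff_eq_add']

theorem sum_lineSize (σ : F → F) (m : F) : ∑ b, lineSize σ m b = Fintype.card F := by
  simp only [lineSize_eq_card_intercept]
  rw [← card_univ, card_eq_sum_card_fiberwise fun i _ => mem_univ (intercept σ m i)]

theorem sum_lineSize_mul (σ : F → F) (m : F) (h : ℕ → ℕ) :
    ∑ b, lineSize σ m b * h (lineSize σ m b) = ∑ p, h (lineSize σ m (intercept σ m p)) := by
  rw [← sum_fiberwise' univ (intercept σ m) fun b => h (lineSize σ m b)]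
  simp only [sum_const, smul_eq_mul, lineSize_eq_card_intercept]

theorem lineSize_intercept (σ : F → F) (m p : F) :
    lineSize σ m (intercept σ m p) = slopeCount σ p m + 1 := by
  rw [lineSize_eq_card_intercept, ← card_erase_add_one (a := p) (by simp), ← filter_erase,
    slopeCount]
  congr 2
  exact filter_congr fun x hx => intercept_eq_intercept_iff_slope_eq (ne_of_mem_erase hx)

theorem choose_slopeCount_le_slopeNorm (σ : F → F) (p s : F) :
    (slopeCount σ p s).choose 2 ≤ slopeNorm σ s := by
  rw [← Nat.add_sub_cancel (slopeCount σ p s) 1, ← lineSize_intercept]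
  exact single_le_sum (f := fun b => (lineSize σ s b - 1).choose 2) (by simp) (mem_univ _)

theorem slope_mem_univ_erase_zero (hσ : Function.Injective σ) {p x : F}
    (hx : x ∈ univ.erase p) : slope σ p x ∈ univ.erase 0 := by
  have hx := ne_of_mem_erase hx
  simp [slope_def_field, sub_eq_zero, hx, hσ.ne hx]

theorem sum_slopeCount (hσ : Function.Injective σ) (p : F) :
    ∑ s ∈ univ.erase 0, slopeCount σ p s = Fintype.card F - 1 := by
  rw [← card_univ, ← card_erase_of_mem (mem_univ p),
    card_eq_sum_card_fiberwise fun x => slope_mem_univ_erase_zero hσ]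
  rfl

theorem prod_slope (hσ : Function.Bijective σ) (p : F) :
    ∏ x ∈ univ.erase p, slope σ p x = 1 := by
  simp only [slope_def_field]
  have hid : ∏ x ∈ univ.erase p, (x - p) = -1 :=
    prod_univ_erase_sub_eq_neg_one Function.bijective_id p
  rw [prod_div_distrib, prod_univ_erase_sub_eq_neg_one hσ p, hid, div_self (by norm_num)]

theorem prod_pow_slopeCount (hσ : Function.Bijective σ) (p : F) :
    ∏ s ∈ univ.erase 0, s ^ slopeCount σ p s = 1 := by
  rw [← prod_slope hσ p, ← prod_fiberwise_of_maps_to'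
    (fun x => slope_mem_univ_erase_zero (p := p) (x := x) hσ.injective) fun s => s]
  simp only [prod_const, slopeCount]

theorem missingSlopes_nonempty (hq : Odd (Fintype.card F)) (hσ : Function.Bijective σ)
    (p : F) : (missingSlopes σ p).Nonempty := by
  by_contra hempty
  have hpos : ∀ s ∈ univ.erase (0 : F), 1 ≤ slopeCount σ p s := fun s hs =>
    Nat.one_le_iff_ne_zero.2 fun h0 => hempty ⟨s, mem_filter.2 ⟨hs, h0⟩⟩
  have hone : ∀ s ∈ univ.erase (0 : F), 1 = slopeCount σ p s := by
    refine (sum_eq_sum_iff_of_le hpos).1 ?_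
    rw [sum_slopeCount hσ.injective, sum_const, card_erase_of_mem (mem_univ _), card_univ,
      smul_eq_mul, mul_one]
  have h := prod_pow_slopeCount hσ p
  rw [prod_congr rfl fun s hs => by rw [← hone s hs, pow_one],
    prod_univ_erase_zero_eq_neg_one] at h
  exact neg_one_ne_one_of_odd_card hq h

theorem slopeCount_neg_eq_two (hσ : Function.Bijective σ) {p m : F}
    (h : missingSlopes σ p = {m}) : slopeCount σ p (-m) = 2 := by
  have hm : m ∈ univ.erase 0 ∧ slopeCount σ p m = 0 := mem_filter.1 (h ▸ mem_singleton_self m)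
  set T := (univ.erase (0 : F)).erase m
  have hpos : ∀ s ∈ T, 1 ≤ slopeCount σ p s := fun s hs =>
    Nat.one_le_iff_ne_zero.2 fun h0 =>
      ne_of_mem_erase hs (mem_singleton.1 (h ▸ mem_filter.2 ⟨mem_of_mem_erase hs, h0⟩))
  have hsum : ∑ s ∈ T, (slopeCount σ p s - 1) = 1 := by
    have hT := add_sum_erase _ (slopeCount σ p) hm.1
    rw [hm.2, zero_add, sum_slopeCount hσ.injective] at hT
    have hcard : #T = Fintype.card F - 2 := by
      rw [card_erase_of_mem hm.1, card_erase_of_mem (mem_univ _), card_univ]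
      omega
    have := Fintype.one_lt_card (α := F)
    rw [sum_tsub_distrib T hpos, hT, sum_const, hcard, smul_eq_mul, mul_one]
    omega
  -- the exponents over `T` exceed `1` at a single slope `s₂`, so the product formula pins it down
  obtain ⟨s₂, hs₂, hd, hprod⟩ := exists_prod_pow_eq_of_sum_eq_one (fun s => s) hsum
  have h1 : (∏ s ∈ T, s) * s₂ = 1 := by
    rw [← hprod, ← prod_mul_distrib, ← prod_pow_slopeCount hσ p, ← mul_prod_erase _ _ hm.1,
      hm.2, pow_zero, one_mul]
    exact prod_congr rfl fun s hs => by rw [← pow_succ', Nat.sub_add_cancel (hpos s hs)]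
  have h2 : m * ∏ s ∈ T, s = -1 := by
    rw [mul_prod_erase _ (fun s => s) hm.1, prod_univ_erase_zero_eq_neg_one]
  have hs₂m : s₂ = -m := by linear_combination s₂ * h2 - m * h1
  have := hpos s₂ hs₂
  rw [← hs₂m]
  omega

theorem exists_slopeCount_eq_zero (hq : Odd (Fintype.card F)) {m : F}
    (hm : slopeNorm σ m = 0) : ∃ p, slopeCount σ p m = 0 := by
  have hle : ∀ b, lineSize σ m b ≤ 2 := fun b => by
    have := Nat.choose_eq_zero_iff.1 (sum_eq_zero_iff.1 hm b (mem_univ b))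
    omega
  obtain ⟨b, hb⟩ : ∃ b, Odd (lineSize σ m b) := by
    by_contra! h
    rw [← sum_lineSize σ m] at hq
    exact Nat.not_even_iff_odd.2 hq (even_sum _ fun b _ => Nat.not_odd_iff_even.1 (h b))
  obtain ⟨p, hp⟩ := card_pos.1 (lineSize_eq_card_intercept σ m b ▸ hb.pos)
  refine ⟨p, ?_⟩
  have hsize := lineSize_intercept σ m p
  rw [(mem_filter.1 hp).2] at hsize
  have := hle b
  obtain ⟨k, hk⟩ := hb
  omega

theorem sum_slopeCount_add_ite_le (σ : F → F) (m : F) :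
    ∑ p, (slopeCount σ p m + if slopeCount σ p m = 0 then 1 else 0)
      ≤ 3 * slopeNorm σ m + Fintype.card F := by
  have h := sum_lineSize_mul σ m fun k => k - 1 + if k = 1 then 1 else 0
  simp only [lineSize_intercept, Nat.add_sub_cancel, Nat.add_eq_right] at h
  rw [← h, slopeNorm, ← sum_lineSize σ m, mul_sum, ← sum_add_distrib]
  exact sum_le_sum fun b _ => mul_sub_one_add_ite_le _

theorem sum_card_missingSlopes_le (hσ : Function.Injective σ) :
    ∑ p, #(missingSlopes σ p) ≤ 3 * graphNorm σ := by
  have h := sum_le_sum fun m (_ : m ∈ univ.erase (0 : F)) => sum_slopeCount_add_ite_le σ m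
  rw [sum_comm, sum_add_distrib, ← mul_sum] at h
  simp only [sum_add_distrib, sum_slopeCount hσ, ← card_filter] at h
  have hnorm : ∑ m ∈ univ.erase (0 : F), slopeNorm σ m ≤ graphNorm σ :=
    sum_le_sum_of_subset (subset_univ _)
  simp only [sum_const, card_univ, smul_eq_mul, card_erase_of_mem (mem_univ _)] at h
  rw [mul_comm] at h
  unfold missingSlopes
  omega

def richSlopes (σ : F → F) : Finset F := {m | slopeNorm σ m ≠ 0}

theorem card_richSlopes_le_graphNorm (σ : F → F) : #(richSlopes σ) ≤ graphNorm σ := calc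
  #(richSlopes σ) = ∑ _m ∈ richSlopes σ, 1 := card_eq_sum_ones _
  _ ≤ ∑ m ∈ richSlopes σ, slopeNorm σ m :=
    sum_le_sum fun _ hm => Nat.one_le_iff_ne_zero.2 (mem_filter.1 hm).2
  _ ≤ graphNorm σ := sum_le_sum_of_subset (subset_univ _)

theorem card_sub_one_le_card_add_two_mul_graphNorm (σ : F → F) :
    Fintype.card F - 1
      ≤ #{m ∈ univ.erase 0 | slopeNorm σ m = 0 ∧ slopeNorm σ (-m) = 0} + 2 * graphNorm σ := by
  have hsub : univ.erase 0
      ⊆ {m ∈ univ.erase (0 : F) | slopeNorm σ m = 0 ∧ slopeNorm σ (-m) = 0}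
        ∪ richSlopes σ ∪ -richSlopes σ := by
    intro m hm
    by_cases h1 : slopeNorm σ m = 0 <;> by_cases h2 : slopeNorm σ (-m) = 0 <;>
      simp [richSlopes, hm, h1, h2]
  have hcard := (card_le_card hsub).trans
    ((card_union_le _ _).trans (add_le_add_left (card_union_le _ _) _))
  rw [card_erase_of_mem (mem_univ _), card_univ, card_neg] at hcard
  have := card_richSlopes_le_graphNorm σ
  omega

theorem card_le_sum_card_missingSlopes (hq : Odd (Fintype.card F))
    (hσ : Function.Bijective σ) : #{m ∈ univ.erase 0 | slopeNorm σ m = 0 ∧ slopeNorm σ (-m) = 0}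
      ≤ ∑ p with 2 ≤ #(missingSlopes σ p), #(missingSlopes σ p) := by
  refine (card_le_card fun m hm => ?_).trans card_biUnion_le
  obtain ⟨hm0, hm, hnegm⟩ := mem_filter.1 hm
  obtain ⟨p, hp⟩ := exists_slopeCount_eq_zero hq hm
  have hmp : m ∈ missingSlopes σ p := mem_filter.2 ⟨hm0, hp⟩
  refine mem_biUnion.2 ⟨p, mem_filter.2 ⟨mem_univ p, ?_⟩, hmp⟩
  by_contra hlt
  have hone : missingSlopes σ p = {m} :=
    eq_singleton_iff_unique_mem.2 ⟨hmp, fun s hs => card_le_one.1 (by omega) s hs m hmp⟩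
  have hle := choose_slopeCount_le_slopeNorm σ p (-m)
  rw [slopeCount_neg_eq_two hσ hone, hnegm] at hle
  exact absurd hle (by decide)

theorem three_mul_card_le_eight_mul_graphNorm_add_one (hq : Odd (Fintype.card F))
    (hσ : Function.Bijective σ) : 3 * Fintype.card F ≤ 8 * graphNorm σ + 1 := by
  have hmissing := sum_card_missingSlopes_le hσ.injective
  have hslopes := card_sub_one_le_card_add_two_mul_graphNorm σ
  have hcover := card_le_sum_card_missingSlopes hq hσ
  have hpoint : 2 * Fintype.card F + ∑ p with 2 ≤ #(missingSlopes σ p), #(missingSlopes σ p)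
      ≤ 2 * ∑ p, #(missingSlopes σ p) := by
    rw [sum_filter, ← card_univ, card_eq_sum_ones, mul_sum, mul_sum, ← sum_add_distrib]
    refine sum_le_sum fun p _ => ?_
    have := (missingSlopes_nonempty hq hσ p).card_pos
    split_ifs <;> omega
  omega

theorem graphNorm_eq_sum (σ : F → F) :
    graphNorm σ = ∑ l : F × F, (lineSize σ l.1 l.2 - 1).choose 2 := by
  rw [Fintype.sum_prod_type]
  rfl

theorem sum_filter_three_le_lineSize_eq_graphNorm (σ : F → F) :
    ∑ l ∈ (univ : Finset (F × F)).filter (fun l => 3 ≤ lineSize σ l.1 l.2),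
      ((lineSize σ l.1 l.2 : ℚ) - 1) * ((lineSize σ l.1 l.2 : ℚ) - 2) / 2 = graphNorm σ := by
  rw [graphNorm_eq_sum, Nat.cast_sum, sum_filter]
  refine sum_congr rfl fun l _ => ?_
  split_ifs with h
  · rw [Nat.cast_choose_two, Nat.cast_sub (by omega)]
    push_cast
    ring
  · rw [Nat.choose_eq_zero_of_lt (by omega), Nat.cast_zero]

theorem graphNorm_le_card_collinear_triples (σ : F → F) :
    graphNorm σ
      ≤ ((univ : Finset (Finset F)).filter (fun s => s.card = 3 ∧ Collin σ s)).card := by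
  let line : F × F → Finset F := fun l => {i | σ i = l.1 * i + l.2}
  have hdisj : ((univ : Finset (F × F)) : Set (F × F)).PairwiseDisjoint
      fun l => (line l).powersetCard 3 := by
    intro l _ l' _ hne
    refine disjoint_left.2 fun s hs hs' => hne ?_
    obtain ⟨hsub, hcard⟩ := mem_powersetCard.1 hs
    obtain ⟨i, hi, j, hj, hij⟩ := one_lt_card.1 (by omega : 1 < #s)
    have hsub' := (mem_powersetCard.1 hs').1
    exact line_eq_of_ne hij (mem_filter.1 (hsub hi)).2 (mem_filter.1 (hsub hj)).2
      (mem_filter.1 (hsub' hi)).2 (mem_filter.1 (hsub' hj)).2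
  have hcollin : univ.biUnion (fun l => (line l).powersetCard 3)
      ⊆ (univ : Finset (Finset F)).filter (fun s => s.card = 3 ∧ Collin σ s) := by
    intro s hs
    obtain ⟨l, -, hs⟩ := mem_biUnion.1 hs
    obtain ⟨hsub, hcard⟩ := mem_powersetCard.1 hs
    refine mem_filter.2 ⟨mem_univ s, hcard, fun i hi k hk j hj => ?_⟩
    rw [(mem_filter.1 (hsub hi)).2, (mem_filter.1 (hsub hk)).2, (mem_filter.1 (hsub hj)).2]
    ring
  calc graphNorm σ ≤ ∑ l : F × F, (lineSize σ l.1 l.2).choose 3 := by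
        rw [graphNorm_eq_sum]
        exact sum_le_sum fun _ _ => choose_sub_one_two_le_choose_three _
    _ = #(univ.biUnion fun l => (line l).powersetCard 3) := by
        rw [card_biUnion hdisj]
        simp only [card_powersetCard, lineSize, line]
    _ ≤ _ := card_le_card hcollin

end GraphCollinearity

/-- For a permutation `σ` of a finite field of odd order `q`,
`‖Γ_σ‖ = Σ_L (|L|-1)(|L|-2)/2` over the maximal collinear subsets `L` of the graph
(equivalently, over the lines meeting the graph in at least 3 points) is at least
`(5q-1)/14`; in particular the number of collinear triples of `Γ_σ` is at least
`(5q-1)/14`. -/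
theorem norm_ge_five_q_sub_one_div_fourteen {F : Type*} [Field F] [Fintype F]
    [DecidableEq F] (hq : Odd (Fintype.card F))
    (σ : F → F) (hσ : Function.Bijective σ) :
    ((5 * Fintype.card F - 1 : ℚ)) / 14 ≤
      ∑ p ∈ (Finset.univ : Finset (F × F)).filter (fun p => 3 ≤ lineSize σ p.1 p.2),
        ((lineSize σ p.1 p.2 : ℚ) - 1) * ((lineSize σ p.1 p.2 : ℚ) - 2) / 2 ∧
    ((5 * Fintype.card F - 1 : ℚ)) / 14 ≤
      ((Finset.univ : Finset (Finset F)).filter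
        (fun s => s.card = 3 ∧ Collin σ s)).card := by
  open GraphCollinearity in
  have hmain : (3 * Fintype.card F : ℚ) ≤ 8 * graphNorm σ + 1 := by
    exact_mod_cast three_mul_card_le_eight_mul_graphNorm_add_one hq hσ
  have hq3 : (3 : ℚ) ≤ Fintype.card F := by
    have := Fintype.one_lt_card (α := F)
    obtain ⟨k, hk⟩ := hq
    exact_mod_cast (by omega : 3 ≤ Fintype.card F)
  have hbound : (5 * Fintype.card F - 1 : ℚ) / 14 ≤ graphNorm σ := by
    rw [div_le_iff₀ (by norm_num)]
    linarith
  rw [sum_filter_three_le_lineSize_eq_graphNorm]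
  exact ⟨hbound, hbound.trans (by exact_mod_cast graphNorm_le_card_collinear_triples σ)⟩
end

section
/- Any Besicovitch set P in F_q², i.e., a set containing a line in every direction (a translate of each of the q+1 lines through the origin in PG(1,q) directions), satisfies |P| ≥ q(q+1)/2. -/
private lemma card_biUnion_key {ι α : Type*} [DecidableEq ι] [DecidableEq α]
    (L : ι → Finset α) (s : Finset ι)
    (h : ∀ i ∈ s, ∀ j ∈ s, i ≠ j → (L i ∩ L j).card ≤ 1) :
    2 * (∑ i ∈ s, ((L i).card : ℤ)) - s.card * (s.card - 1)
      ≤ 2 * ((s.biUnion L).card : ℤ) := by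
  induction s using Finset.induction_on with
  | empty => simp
  | @insert a s ha ih =>
    have hsub : L a ∩ s.biUnion L ⊆ s.biUnion (fun i => L a ∩ L i) := by
      intro x hx
      simp only [Finset.mem_inter, Finset.mem_biUnion] at hx ⊢
      obtain ⟨hx1, i, hi, hx2⟩ := hx
      exact ⟨i, hi, hx1, hx2⟩
    have h1 : (L a ∩ s.biUnion L).card ≤ s.card := by
      calc (L a ∩ s.biUnion L).card
          ≤ (s.biUnion (fun i => L a ∩ L i)).card := Finset.card_le_card hsub
        _ ≤ ∑ i ∈ s, (L a ∩ L i).card := Finset.card_biUnion_le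
        _ ≤ ∑ i ∈ s, 1 := Finset.sum_le_sum (fun i hi =>
            h a (Finset.mem_insert_self a s) i (Finset.mem_insert_of_mem hi)
              (fun he => ha (he ▸ hi)))
        _ = s.card := by simp
    have h2 := Finset.card_union_add_card_inter (L a) (s.biUnion L)
    have ih' := ih (fun i hi j hj hij =>
      h i (Finset.mem_insert_of_mem hi) j (Finset.mem_insert_of_mem hj) hij)
    rw [Finset.biUnion_insert, Finset.sum_insert ha, Finset.card_insert_of_notMem ha]
    have h1' : ((L a ∩ s.biUnion L).card : ℤ) ≤ (s.card : ℤ) := by exact_mod_cast h1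
    have h2' : ((L a ∪ s.biUnion L).card : ℤ) + (L a ∩ s.biUnion L).card
        = (L a).card + (s.biUnion L).card := by exact_mod_cast h2
    push_cast
    nlinarith [h1', h2', ih']

/-- Any Besicovitch set `P` in `F_q²` — a set containing a full line in each of the
`q+1` directions (all `q` nonvertical slopes and the vertical direction) — has
cardinality at least `q(q+1)/2`. -/
theorem besicovitch_lower_bound {F : Type*} [Field F] [Fintype F] [DecidableEq F]
    (P : Finset (F × F))
    (hslopes : ∀ m : F, ∃ b : F, ∀ x : F, (x, m * x + b) ∈ P)
    (hvert : ∃ a : F, ∀ y : F, (a, y) ∈ P) :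
    (Fintype.card F * (Fintype.card F + 1) : ℚ) / 2 ≤ P.card := by
  classical
  set q := Fintype.card F with hq
  choose b hb using hslopes
  obtain ⟨a, ha⟩ := hvert
  set L : Option F → Finset (F × F) := fun o =>
    match o with
    | none => Finset.univ.image (fun y => (a, y))
    | some m => Finset.univ.image (fun x => (x, m * x + b m)) with hL
  have memL : ∀ m (p : F × F), p ∈ L (some m) ↔ p.2 = m * p.1 + b m := by
    intro m p
    simp only [hL, Finset.mem_image, Finset.mem_univ, true_and, Prod.ext_iff]
    constructor
    · rintro ⟨x, hx, hy⟩; subst hx; exact hy.symm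
    · intro h; exact ⟨p.1, rfl, h.symm⟩
  have memN : ∀ (p : F × F), p ∈ L none ↔ p.1 = a := by
    intro p
    simp only [hL, Finset.mem_image, Finset.mem_univ, true_and, Prod.ext_iff]
    constructor
    · rintro ⟨y, hx, hy⟩; exact hx.symm
    · intro h; exact ⟨p.2, h.symm, rfl⟩
  have cardL : ∀ o, (L o).card = q := by
    rintro (_ | m)
    · rw [hL]
      rw [Finset.card_image_of_injective _ (fun y z h => (Prod.mk.injEq _ _ _ _ ▸ h).2)]
      simp [hq]
    · rw [hL]
      rw [Finset.card_image_of_injective _ (fun y z h => (Prod.mk.injEq _ _ _ _ ▸ h).1)]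
      simp [hq]
  have hinter : ∀ i ∈ (Finset.univ : Finset (Option F)), ∀ j ∈ Finset.univ,
      i ≠ j → (L i ∩ L j).card ≤ 1 := by
    rintro (_ | m) - (_ | m') - hij
    · exact absurd rfl hij
    · refine Finset.card_le_one.mpr (fun p hp r hr => ?_)
      simp only [Finset.mem_inter, memN, memL] at hp hr
      have : p = (a, m' * a + b m') := Prod.ext hp.1 (by rw [hp.2, hp.1])
      have hr' : r = (a, m' * a + b m') := Prod.ext hr.1 (by rw [hr.2, hr.1])
      rw [this, hr']
    · refine Finset.card_le_one.mpr (fun p hp r hr => ?_)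
      simp only [Finset.mem_inter, memN, memL] at hp hr
      have : p = (a, m * a + b m) := Prod.ext hp.2 (by rw [hp.1, hp.2])
      have hr' : r = (a, m * a + b m) := Prod.ext hr.2 (by rw [hr.1, hr.2])
      rw [this, hr']
    · have hmm : m ≠ m' := fun h => hij (by rw [h])
      refine Finset.card_le_one.mpr (fun p hp r hr => ?_)
      simp only [Finset.mem_inter, memL] at hp hr
      have hx : ∀ s : F × F, s.2 = m * s.1 + b m → s.2 = m' * s.1 + b m' →
          s.1 = (b m' - b m) / (m - m') := by
        intro s h1 h2
        have hne : m - m' ≠ 0 := sub_ne_zero.mpr hmm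
        field_simp
        linear_combination h2 - h1
      have hx1 := hx p hp.1 hp.2
      have hx2 := hx r hr.1 hr.2
      have hxx : p.1 = r.1 := hx1.trans hx2.symm
      exact Prod.ext hxx (by rw [hp.1, hr.1, hxx])
  have key := card_biUnion_key L Finset.univ hinter
  have hsubP : (Finset.univ : Finset (Option F)).biUnion L ⊆ P := by
    intro p hp
    simp only [Finset.mem_biUnion, Finset.mem_univ, true_and] at hp
    obtain ⟨o, ho⟩ := hp
    rcases o with _ | m
    · rw [memN] at ho
      have := ha p.2; rwa [← ho] at this
    · rw [memL] at ho
      have := hb m p.1; rwa [← ho] at this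
  have hcm : (Finset.univ : Finset (Option F)).card = q + 1 := by
    simp [hq, Fintype.card_option]
  have hsum : ∑ o ∈ (Finset.univ : Finset (Option F)), ((L o).card : ℤ) = (q + 1) * q := by
    simp [cardL, hcm]
  rw [hsum, hcm] at key
  have hPc : (((Finset.univ : Finset (Option F)).biUnion L).card : ℤ) ≤ (P.card : ℤ) := by
    exact_mod_cast Finset.card_le_card hsubP
  have : (q * (q + 1) : ℤ) ≤ 2 * P.card := by push_cast at key ⊢; nlinarith
  rw [div_le_iff₀ (by norm_num : (0:ℚ) < 2)]
  have h2q : ((q : ℚ) * (q + 1)) ≤ 2 * P.card := by exact_mod_cast this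
  linarith
end

section
/- For q odd, there is a Besicovitch set in F_q² of size q(q+1)/2 + (q-1)/2. -/
/-!
The points `(x, y)` with `x² - y` a square form the union of the tangent lines
`y = 2tx - t²` of the parabola `y = x²`, since `x² - (2tx - t²) = (x - t)²`; in odd
characteristic these lines have every slope. Each column `x = c` of this set is `c²` minus the
`(q + 1)/2` squares, and adding the vertical line `x = 0` contributes the `(q - 1)/2`
points `(0, y)` with `-y` a non-square.
-/

open Finset

namespace FiniteField

variable {F : Type*} [Field F] [Fintype F]

theorem ringChar_ne_two_of_odd_card (hq : Odd (Fintype.card F)) : ringChar F ≠ 2 := fun h ↦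
  Nat.not_even_iff_odd.mpr hq (Nat.even_iff.mpr (even_card_of_char_two h))

variable [DecidableEq F]

theorem card_sqrts_of_isSquare (hF : ringChar F ≠ 2) {a : F} (ha : IsSquare a) (ha0 : a ≠ 0) :
    #{x : F | x ^ 2 = a} = 2 := by
  have h := quadraticChar_card_sqrts hF a
  rw [(quadraticChar_one_iff_isSquare ha0).mpr ha, Set.toFinset_ofPred] at h
  exact_mod_cast h

theorem two_mul_card_isSquare (hF : ringChar F ≠ 2) :
    2 * #{a : F | IsSquare a} = Fintype.card F + 1 := by
  set S : Finset F := {a : F | IsSquare a}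
  have h0 : (0 : F) ∈ S := by simp [S]
  have hfibers : Fintype.card F = ∑ a ∈ S, #{x : F | x ^ 2 = a} :=
    card_eq_sum_card_fiberwise fun x _ ↦ by simp [S, IsSquare.sq x]
  have hnonzero : ∀ a ∈ S.erase 0, #{x : F | x ^ 2 = a} = 2 := fun a ha ↦
    card_sqrts_of_isSquare hF (mem_filter.mp (mem_of_mem_erase ha)).2 (ne_of_mem_erase ha)
  rw [← add_sum_erase _ _ h0, sum_congr rfl hnonzero, sum_const, card_erase_of_mem h0] at hfibers
  simp only [sq_eq_zero_iff, filter_eq', mem_univ, if_true, card_singleton, smul_eq_mul]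
    at hfibers
  have := card_pos.mpr ⟨0, h0⟩
  omega

end FiniteField

section ParabolaTangents

variable {F : Type*} [Field F] [Fintype F] [DecidableEq F]

variable (F) in
def parabolaTangents : Finset (F × F) :=
  {p | IsSquare (p.1 ^ 2 - p.2)}

theorem mk_mem_parabolaTangents (h2 : (2 : F) ≠ 0) (m x : F) :
    (x, m * x - (m / 2) ^ 2) ∈ parabolaTangents F := by
  simp only [parabolaTangents, mem_filter_univ]
  exact ⟨x - m / 2, by field_simp; ring⟩

theorem card_parabolaTangents :
    #(parabolaTangents F) = Fintype.card F * #{a : F | IsSquare a} := by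
  rw [← card_univ, ← card_product]
  refine card_nbij' (fun p ↦ (p.1, p.1 ^ 2 - p.2)) (fun p ↦ (p.1, p.1 ^ 2 - p.2)) ?_ ?_ ?_ ?_
  · intro p hp
    simpa [parabolaTangents] using hp
  · intro p hp
    simpa [parabolaTangents] using hp
  all_goals intro p _; simp

theorem card_parabolaTangents_inter_vertical :
    #(parabolaTangents F ∩ {0} ×ˢ univ) = #{a : F | IsSquare a} := by
  refine card_nbij' (fun p ↦ -p.2) (fun a ↦ (0, -a)) ?_ ?_ ?_ ?_
  · rintro ⟨x, y⟩ hp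
    obtain ⟨hsq, rfl⟩ : IsSquare (x ^ 2 - y) ∧ 0 = x := by simpa [parabolaTangents] using hp
    simpa using hsq
  · intro a ha
    simpa [parabolaTangents] using ha
  · rintro ⟨x, y⟩ hp
    simp_all
  · intro a _
    simp

end ParabolaTangents

/-- For `q` odd there is a Besicovitch set in `F_q²` of size
`q(q+1)/2 + (q-1)/2`. -/
theorem besicovitch_upper_bound {F : Type*} [Field F] [Fintype F] [DecidableEq F]
    (hq : Odd (Fintype.card F)) :
    ∃ P : Finset (F × F),
      (∀ m : F, ∃ b : F, ∀ x : F, (x, m * x + b) ∈ P) ∧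
      (∃ a : F, ∀ y : F, (a, y) ∈ P) ∧
      (P.card : ℚ) = Fintype.card F * (Fintype.card F + 1) / 2 +
        (Fintype.card F - 1) / 2 := by
  have hF := FiniteField.ringChar_ne_two_of_odd_card hq
  refine ⟨parabolaTangents F ∪ {0} ×ˢ univ, fun m ↦ ⟨-(m / 2) ^ 2, fun x ↦ ?_⟩,
    ⟨0, fun y ↦ by simp⟩, ?_⟩
  · rw [← sub_eq_add_neg]
    exact mem_union_left _ (mk_mem_parabolaTangents (Ring.two_ne_zero hF) m x)
  have hunion := card_union_add_card_inter (parabolaTangents F) ({0} ×ˢ univ)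
  rw [card_parabolaTangents, card_parabolaTangents_inter_vertical, card_product, card_singleton,
    card_univ, one_mul] at hunion
  have hsquares := FiniteField.two_mul_card_isSquare hF
  qify at hunion hsquares
  linear_combination hunion + ((Fintype.card F : ℚ) - 1) / 2 * hsquares
end

section
/- Let q be odd and σ : F_q → F_q a semipermutation (|σ(F_q)| = q-1, with the two collisions σ(z_1) = σ(z_2) = a, z_1 ≠ z_2, and b the unique value not attained). Suppose x = (j, σ(j)) with j ∉ {z_1, z_2} is lonely (lies in exactly one collinear triple of Γ_σ), with m_j the slope of that triple and m_j^⊥ the unique slope in F_q* whose line through x meets Γ_σ only at x. Then m_j^⊥ = -m_j · (σ(j) - b)/(σ(j) - a). -/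
open Finset

section FiniteField

variable {F : Type*} [Field F] [Fintype F] [DecidableEq F]

theorem prod_univ_erase_zero_eq_neg_one : ∏ x ∈ univ.erase (0 : F), x = -1 := by
  have hunits : ∏ u : Fˣ, (u : F) = -1 := by
    rw [← Units.coe_prod, FiniteField.prod_univ_units_id_eq_neg_one, Units.val_neg, Units.val_one]
  rw [← hunits]
  exact prod_bij' (fun x hx => Units.mk0 x (ne_of_mem_erase hx)) (fun u _ => (u : F))
    (fun _ _ => mem_univ _) (fun u _ => by simp) (fun _ _ => rfl) (fun u _ => Units.mk0_val u _)
    (fun _ _ => rfl)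

theorem prod_univ_erase_sub_eq_neg_one (d : F) : ∏ x ∈ univ.erase d, (x - d) = -1 := by
  rw [← prod_univ_erase_zero_eq_neg_one]
  exact prod_nbij' (· - d) (· + d) (by simp [sub_eq_zero]) (by simp)
    (by simp) (by simp) (by simp)

theorem mul_prod_eq_neg_of_injOn_erase {α : Type*} [DecidableEq α] {s : Finset α} {f : α → F}
    {c : F} {k : α} (hc : c ≠ 0) (hk : k ∈ s) (hs : #s = Fintype.card F - 1)
    (hf : Set.InjOn f (s.erase k)) (hf0 : ∀ i ∈ s, f i ≠ 0) (hfc : ∀ i ∈ s, f i ≠ c) :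
    c * ∏ i ∈ s, f i = -f k := by
  have hc' : c ∈ univ.erase 0 := by simpa using hc
  have himage : (s.erase k).image f = (univ.erase 0).erase c := by
    refine eq_of_subset_of_card_le (fun y hy => ?_) ?_
    · obtain ⟨i, hi, rfl⟩ := mem_image.mp hy
      have hi := mem_of_mem_erase hi
      simp [hf0 i hi, hfc i hi]
    · rw [card_image_of_injOn hf, card_erase_of_mem hk, card_erase_of_mem hc',
        card_erase_of_mem (mem_univ _), card_univ, hs]
  have hwilson := mul_prod_erase _ (fun x : F => x) hc'
  rw [prod_univ_erase_zero_eq_neg_one] at hwilson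
  have hprod : ∏ i ∈ s.erase k, f i = ∏ y ∈ (univ.erase 0).erase c, y := by
    rw [← himage, prod_image hf]
  rw [← mul_prod_erase s f hk, hprod]
  linear_combination f k * hwilson

theorem prod_slope_erase (f : F → F) (j : F) :
    ∏ i ∈ univ.erase j, slope f j i = -∏ i ∈ univ.erase j, (f i - f j) := by
  simp_rw [slope_def_field]
  rw [prod_div_distrib, prod_univ_erase_sub_eq_neg_one, div_neg, div_one]

theorem mul_prod_sub_of_injOn_compl {σ : F → F} {z b j : F} (hσ : Set.InjOn σ {z}ᶜ)
    (hb : b ∉ Set.range σ) (hjz : j ≠ z) (hzj : σ z ≠ σ j) :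
    (b - σ j) * ∏ i ∈ univ.erase j, (σ i - σ j) = -(σ z - σ j) := by
  refine mul_prod_eq_neg_of_injOn_erase (sub_ne_zero.mpr fun h => hb ⟨j, h.symm⟩)
    (mem_erase.mpr ⟨hjz.symm, mem_univ z⟩) (by rw [card_erase_of_mem (mem_univ j), card_univ])
    ?_ ?_ ?_
  · intro i hi k hk hik
    simp only [coe_erase, coe_univ, Set.mem_sdiff, Set.mem_singleton_iff] at hi hk
    exact hσ hi.2 hk.2 (sub_left_inj.mp hik)
  · intro i hi
    rw [sub_ne_zero]
    by_cases hiz : i = z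
    · exact hiz ▸ hzj
    · exact fun h => ne_of_mem_erase hi (hσ hiz hjz h)
  · intro i _
    rw [Ne, sub_left_inj]
    exact fun h => hb ⟨i, h⟩

end FiniteField

section Collision

variable {α β : Type*} {σ : α → β} {z1 z2 : α}

theorem injOn_compl_of_collision
    (hinj : ∀ i k, σ i = σ k → i = k ∨ ({i, k} : Set α) = {z1, z2}) :
    Set.InjOn σ {z2}ᶜ := by
  intro i hi k hk hik
  refine (hinj i k hik).resolve_right fun hpair => ?_
  have hz2 : z2 ∈ ({i, k} : Set α) := hpair ▸ Set.mem_insert_of_mem _ rfl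
  rcases hz2 with rfl | rfl
  exacts [hi rfl, hk rfl]

theorem apply_ne_of_collision
    (hinj : ∀ i k, σ i = σ k → i = k ∨ ({i, k} : Set α) = {z1, z2})
    {i j : α} (hj1 : j ≠ z1) (hj2 : j ≠ z2) (hij : i ≠ j) : σ i ≠ σ j := by
  intro hσ
  have hj : j ∈ ({z1, z2} : Set α) :=
    (hinj i j hσ).resolve_left hij ▸ Set.mem_insert_of_mem i rfl
  rcases hj with rfl | rfl
  exacts [hj1 rfl, hj2 rfl]

end Collision

theorem slope_eq_iff_mem_line {F : Type*} [Field F] {σ : F → F} {i j : F} (m : F)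
    (hij : i ≠ j) :
    slope σ j i = m ↔ σ i - σ j = m * (i - j) := by
  rw [slope_def_field, div_eq_iff (sub_ne_zero.mpr hij)]

section Lines

variable {F : Type*} [Field F] [Fintype F] [DecidableEq F] {σ : F → F} {j : F}

theorem slope_ne_of_lineCount_eq_one {m : F} (h1 : lineCount σ (j, σ j) m = 1) {i : F}
    (hij : i ≠ j) : slope σ j i ≠ m := by
  intro h
  unfold lineCount at h1
  have hi := (slope_eq_iff_mem_line m hij).mp h
  exact hij (card_le_one.mp h1.le i (by simpa using hi) j (by simp))

theorem pair_mem_triplesThrough {i k : F} (hik : i ≠ k) (hij : i ≠ j) (hkj : k ≠ j)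
    (h : slope σ j i = slope σ j k) : {i, k} ∈ triplesThrough σ j := by
  have hline : ∀ l ∈ ({i, k} : Finset F), σ l - σ j = slope σ j i * (l - j) := by
    simp only [mem_insert, mem_singleton, forall_eq_or_imp, forall_eq]
    exact ⟨(slope_eq_iff_mem_line _ hij).mp rfl, (slope_eq_iff_mem_line _ hkj).mp h.symm⟩
  refine mem_filter.mpr ⟨mem_univ _, card_pair hik, by simp [hij.symm, hkj.symm], ?_⟩
  intro l hl l' hl'
  rw [hline l hl, hline l' hl']
  ring

theorem exists_pair_mem_triplesThrough_of_lineCount_eq_three {m : F}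
    (h3 : lineCount σ (j, σ j) m = 3) :
    ∃ k k', k ≠ j ∧ slope σ j k = m ∧ {k, k'} ∈ triplesThrough σ j := by
  unfold lineCount at h3
  set line := univ.filter fun i => σ i - (j, σ j).2 = m * (i - (j, σ j).1)
  have hj : j ∈ line := by simp [line]
  obtain ⟨k, k', hkk', hpair⟩ : ∃ k k', k ≠ k' ∧ line.erase j = {k, k'} :=
    card_eq_two.mp (by rw [card_erase_of_mem hj, h3])
  have hmem : ∀ l ∈ ({k, k'} : Finset F), l ≠ j ∧ slope σ j l = m := by
    intro l hl
    rw [← hpair, mem_erase] at hl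
    refine ⟨hl.1, (slope_eq_iff_mem_line m hl.1).mpr (by simpa [line] using hl.2)⟩
  obtain ⟨hkj, hk⟩ := hmem k (by simp)
  obtain ⟨hk'j, hk'⟩ := hmem k' (by simp)
  exact ⟨k, k', hkj, hk, pair_mem_triplesThrough hkk' hkj hk'j (hk.trans hk'.symm)⟩

theorem injOn_slope_of_card_triplesThrough_eq_one (hlone : #(triplesThrough σ j) = 1)
    {k k' : F} (hk : {k, k'} ∈ triplesThrough σ j) :
    Set.InjOn (slope σ j) ((univ.erase j).erase k) := by
  intro i hi i' hi' h
  by_contra hii'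
  simp only [coe_erase, coe_univ, Set.mem_sdiff, Set.mem_singleton_iff] at hi hi'
  have hpair := card_le_one.mp hlone.le _ (pair_mem_triplesThrough hii' hi.1.2 hi'.1.2 h) _ hk
  have hk : k ∈ ({i, i'} : Finset F) := hpair ▸ mem_insert_self k {k'}
  rcases mem_insert.mp hk with rfl | hk'
  exacts [hi.2 rfl, hi'.2 (mem_singleton.mp hk').symm]

theorem mul_prod_slope_eq_neg_of_lonely (hne : ∀ i, i ≠ j → σ i ≠ σ j)
    (hlone : #(triplesThrough σ j) = 1) {mj mp : F} (h3 : lineCount σ (j, σ j) mj = 3)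
    (hmp : mp ≠ 0) (h1 : lineCount σ (j, σ j) mp = 1) :
    mp * ∏ i ∈ univ.erase j, slope σ j i = -mj := by
  obtain ⟨k, k', hkj, rfl, htriple⟩ := exists_pair_mem_triplesThrough_of_lineCount_eq_three h3
  refine mul_prod_eq_neg_of_injOn_erase hmp (mem_erase.mpr ⟨hkj, mem_univ k⟩)
    (by rw [card_erase_of_mem (mem_univ j), card_univ])
    (injOn_slope_of_card_triplesThrough_eq_one hlone htriple) (fun i hi => ?_)
    (fun i hi => slope_ne_of_lineCount_eq_one h1 (ne_of_mem_erase hi))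
  have hij := ne_of_mem_erase hi
  rw [slope_def_field]
  exact div_ne_zero (sub_ne_zero.mpr (hne i hij)) (sub_ne_zero.mpr hij)

end Lines

theorem semiperm_lonely_perp_slope_general {F : Type*} [Field F] [Fintype F] [DecidableEq F]
    (σ : F → F) (z1 z2 a b : F)
    (ha2 : σ z2 = a)
    (hinj : ∀ i k : F, σ i = σ k → i = k ∨ ({i, k} : Set F) = {z1, z2})
    (hb : b ∉ Set.range σ)
    (j : F) (hj1 : j ≠ z1) (hj2 : j ≠ z2)
    (hlone : (triplesThrough σ j).card = 1)
    (mj mp : F) (h3 : lineCount σ (j, σ j) mj = 3)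
    (hmp : mp ≠ 0) (h1 : lineCount σ (j, σ j) mp = 1) :
    mp = -mj * (σ j - b) / (σ j - a) := by
  have hne : ∀ i, i ≠ j → σ i ≠ σ j := fun i => apply_ne_of_collision hinj hj1 hj2
  have hz2 : σ z2 ≠ σ j := hne z2 hj2.symm
  have hslopes := mul_prod_slope_eq_neg_of_lonely hne hlone h3 hmp h1
  have hvalues := mul_prod_sub_of_injOn_compl (injOn_compl_of_collision hinj) hb hj2 hz2
  rw [prod_slope_erase] at hslopes
  rw [ha2] at hz2 hvalues
  rw [eq_div_iff (sub_ne_zero.mpr hz2.symm)]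
  linear_combination -(b - σ j) * hslopes - mp * hvalues

/-- Let `σ` be a semipermutation of a finite field of odd order: its only collision is
`σ z₁ = σ z₂ = a` with `z₁ ≠ z₂`, and `b` is the unique value not attained.  If
`x = (j, σ j)` with `j ∉ {z₁, z₂}` is lonely, `m_j` is the slope of its unique
collinear triple and `m_j^⊥` the unique nonzero slope whose line through `x` meets
the graph only at `x`, then `m_j^⊥ = -m_j (σ j - b)/(σ j - a)`. -/
theorem semiperm_lonely_perp_slope {F : Type*} [Field F] [Fintype F] [DecidableEq F]
    (hq : Odd (Fintype.card F)) (σ : F → F) (z1 z2 a b : F) (hz : z1 ≠ z2)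
    (ha1 : σ z1 = a) (ha2 : σ z2 = a)
    (hinj : ∀ i k : F, σ i = σ k → i = k ∨ ({i, k} : Set F) = {z1, z2})
    (hb : b ∉ Set.range σ)
    (j : F) (hj1 : j ≠ z1) (hj2 : j ≠ z2)
    (hlone : (triplesThrough σ j).card = 1)
    (mj mp : F) (hmj : mj ≠ 0) (h3 : lineCount σ (j, σ j) mj = 3)
    (hmp : mp ≠ 0) (h1 : lineCount σ (j, σ j) mp = 1) :
    mp = -mj * (σ j - b) / (σ j - a) :=
  semiperm_lonely_perp_slope_general σ z1 z2 a b ha2 hinj hb j hj1 hj2 hlone mj mp h3 hmp h1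
end

section
/- Let q be odd and σ : F_q → F_q a semipermutation with σ(z_1) = σ(z_2) = a (z_1 ≠ z_2) and missing value b. Suppose x = (z_1, a) is lonely in C(Γ_σ). Then there is exactly one slope m with a 3-point line through x, exactly two slopes m^⊥_1, m^⊥_2 each giving a line meeting Γ_σ only at x, and all other nonzero slopes give 2-point lines; moreover m^⊥_1 · m^⊥_2 = m · (a - b)/(z_2 - z_1). -/
open Finset

theorem prod_nonzero_eq_neg_one {F : Type*} [Field F] [Fintype F] [DecidableEq F] :
    ∏ x ∈ (univ : Finset F) \ {0}, x = -1 := by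
  have h1 : ∏ x : Fˣ, (x : F) = -1 := by
    simp_rw [← Units.coeHom_apply]
    rw [← map_prod (Units.coeHom F),
      FiniteField.prod_univ_units_id_eq_neg_one]
    simp
  rw [← h1]
  refine Finset.prod_nbij' (fun x => if h : x = (0:F) then 1 else Units.mk0 x h)
    (fun u => (u : F)) ?_ ?_ ?_ ?_ ?_
  · intro a _; exact mem_univ _
  · intro u _; simp [Units.ne_zero u]
  · intro a ha
    simp only [mem_sdiff, mem_singleton] at ha
    simp [ha.2]
  · intro u _
    simp [Units.ne_zero u]
  · intro a ha
    simp only [mem_sdiff, mem_singleton] at ha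
    simp [ha.2]

theorem aux_prod {F : Type*} [Field F] [Fintype F] [DecidableEq F] (c d : F) (hd : d ≠ c) :
    ∏ i ∈ (univ : Finset F) \ {c, d}, (i - c) = -(d - c)⁻¹ := by
  have hdc : d - c ≠ 0 := sub_ne_zero.mpr hd
  have himg : ((univ : Finset F) \ {c, d}).image (fun i => i - c) = (univ : Finset F) \ {0, d - c} := by
    ext t
    simp only [mem_image, mem_sdiff, mem_univ, true_and, mem_insert, mem_singleton, not_or]
    constructor
    · rintro ⟨i, ⟨hi1, hi2⟩, rfl⟩
      exact ⟨sub_ne_zero.mpr hi1, fun h => hi2 (by linear_combination h)⟩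
    · rintro ⟨h1, h2⟩
      exact ⟨t + c, ⟨fun h => h1 (by linear_combination h), fun h => h2 (by linear_combination h)⟩, by ring⟩
  have hinj : ∀ x ∈ (univ : Finset F) \ {c, d}, ∀ y ∈ (univ : Finset F) \ {c, d},
      x - c = y - c → x = y := fun x _ y _ h => by linear_combination h
  have h1 : ∏ i ∈ (univ : Finset F) \ {c, d}, (i - c) = ∏ t ∈ (univ : Finset F) \ {0, d - c}, t := by
    rw [← himg, Finset.prod_image hinj]
  have e1 : (univ : Finset F) \ {0, d - c} = ((univ : Finset F) \ {0}).erase (d - c) := by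
    ext x; simp only [mem_sdiff, mem_univ, true_and, mem_insert, mem_singleton, not_or, mem_erase]
    tauto
  have hmem : d - c ∈ (univ : Finset F) \ {0} := by simp [hdc]
  have h2 := Finset.prod_erase_mul ((univ : Finset F) \ {0}) id hmem
  simp only [id_eq] at h2
  rw [prod_nonzero_eq_neg_one] at h2
  rw [h1, e1]
  field_simp
  linear_combination h2

/-- Let `σ` be a semipermutation of a finite field of odd order, with collision
`σ z₁ = σ z₂ = a` (`z₁ ≠ z₂`) and missing value `b`.  If `x = (z₁, a)` is lonely,
then there is exactly one slope `m` with a 3-point line through `x`, exactly two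
slopes `m₁^⊥ ≠ m₂^⊥` whose lines meet the graph only at `x`, all other nonzero
slopes give 2-point lines, and `m₁^⊥ m₂^⊥ = m (a - b)/(z₂ - z₁)`. -/
theorem semiperm_lonely_at_collision {F : Type*} [Field F] [Fintype F] [DecidableEq F]
    (hq : Odd (Fintype.card F)) (σ : F → F) (z1 z2 a b : F) (hz : z1 ≠ z2)
    (ha1 : σ z1 = a) (ha2 : σ z2 = a)
    (hinj : ∀ i k : F, σ i = σ k → i = k ∨ ({i, k} : Set F) = {z1, z2})
    (hb : b ∉ Set.range σ)
    (hlone : (triplesThrough σ z1).card = 1) :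
    ∃ m mp1 mp2 : F, m ≠ 0 ∧ mp1 ≠ 0 ∧ mp2 ≠ 0 ∧ mp1 ≠ mp2 ∧
      lineCount σ (z1, a) m = 3 ∧
      lineCount σ (z1, a) mp1 = 1 ∧ lineCount σ (z1, a) mp2 = 1 ∧
      (∀ m' : F, m' ≠ 0 → m' ≠ m → m' ≠ mp1 → m' ≠ mp2 →
        lineCount σ (z1, a) m' = 2) ∧
      mp1 * mp2 = m * (a - b) / (z2 - z1) := by
  classical
  have hz' : z2 - z1 ≠ 0 := sub_ne_zero.mpr (Ne.symm hz)
  have hab : a ≠ b := fun h => hb ⟨z1, by rw [ha1, h]⟩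
  have hba : b - a ≠ 0 := sub_ne_zero.mpr (Ne.symm hab)
  set S : Finset F := univ \ {z1, z2} with hSdef
  have hmemS : ∀ i : F, i ∈ S ↔ i ≠ z1 ∧ i ≠ z2 := by
    intro i; simp [hSdef, not_or]
  -- σ i ≠ a off the collision
  have hσa : ∀ i : F, i ≠ z1 → i ≠ z2 → σ i ≠ a := by
    intro i h1 h2 h
    rcases hinj i z1 (by rw [h, ha1]) with h' | h'
    · exact h1 h'
    · have hi : i ∈ ({z1, z2} : Set F) := h' ▸ (by simp : i ∈ ({i, z1} : Set F))
      rcases hi with h'' | h''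
      · exact h1 h''
      · exact h2 h''
  have hz2 : ∀ i : F, i ≠ z1 → σ i = a → i = z2 := by
    intro i h1 h2
    by_contra h3
    exact hσa i h1 h3 h2
  set f : F → F := fun i => (σ i - a) / (i - z1) with hfdef
  have hf_ne : ∀ i ∈ S, f i ≠ 0 := by
    intro i hi
    rw [hmemS] at hi
    exact div_ne_zero (sub_ne_zero.mpr (hσa i hi.1 hi.2)) (sub_ne_zero.mpr hi.1)
  have hf_eq : ∀ i : F, i ≠ z1 → ∀ m' : F, (f i = m' ↔ σ i - a = m' * (i - z1)) := by
    intro i hi m'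
    rw [hfdef]
    exact div_eq_iff (sub_ne_zero.mpr hi)
  have hz1S : z1 ∉ S := by simp [hmemS]
  -- lineCount in terms of fibers of f
  have hline : ∀ m' : F, m' ≠ 0 →
      lineCount σ (z1, a) m' = (S.filter (fun i => f i = m')).card + 1 := by
    intro m' hm'
    have hset : (univ.filter (fun i : F => σ i - a = m' * (i - z1)))
        = insert z1 (S.filter (fun i => f i = m')) := by
      ext i
      simp only [mem_filter, mem_univ, true_and, mem_insert]
      constructor
      · intro h
        by_cases h1 : i = z1
        · exact Or.inl h1
        · have h2 : i ≠ z2 := by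
            rintro rfl
            rw [ha2, sub_self] at h
            rcases mul_eq_zero.mp h.symm with h | h
            · exact hm' h
            · exact hz' h
          exact Or.inr ⟨(hmemS i).2 ⟨h1, h2⟩, (hf_eq i h1 m').2 h⟩
      · rintro (rfl | ⟨hiS, hfi⟩)
        · rw [ha1]; ring
        · exact (hf_eq i ((hmemS i).1 hiS).1 m').1 hfi
    have : lineCount σ (z1, a) m'
        = (univ.filter (fun i : F => σ i - a = m' * (i - z1))).card := rfl
    rw [this, hset, card_insert_of_notMem (fun h => hz1S (mem_filter.mp h).1)]
  -- characterization of triples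
  have hclaim : ∀ u v : F, u ≠ v → u ≠ z1 → v ≠ z1 →
      (σ u - a) * (v - z1) = (σ v - a) * (u - z1) → u ≠ z2 := by
    rintro u v huv hu1 hv1 hc rfl
    rw [ha2, sub_self, zero_mul] at hc
    rcases mul_eq_zero.mp hc.symm with h | h
    · exact huv (hz2 v hv1 (sub_eq_zero.mp h)).symm
    · exact hz' h
  have htr : ∀ s : Finset F, s ∈ triplesThrough σ z1 ↔
      ∃ i k : F, i ∈ S ∧ k ∈ S ∧ i ≠ k ∧ f i = f k ∧ s = {i, k} := by
    intro s
    simp only [triplesThrough, mem_filter, mem_univ, true_and]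
    constructor
    · rintro ⟨hcard, hz1s, hcoll⟩
      obtain ⟨x, y, hxy, rfl⟩ := card_eq_two.mp hcard
      have hx1 : x ≠ z1 := fun h => hz1s (by simp [h])
      have hy1 : y ≠ z1 := fun h => hz1s (by simp [h])
      have hc := hcoll x (by simp) y (by simp)
      rw [ha1] at hc
      have hx2 : x ≠ z2 := hclaim x y hxy hx1 hy1 hc
      have hy2 : y ≠ z2 := hclaim y x hxy.symm hy1 hx1 hc.symm
      refine ⟨x, y, (hmemS x).2 ⟨hx1, hx2⟩, (hmemS y).2 ⟨hy1, hy2⟩, hxy, ?_, rfl⟩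
      rw [hfdef]
      rw [div_eq_div_iff (sub_ne_zero.mpr hx1) (sub_ne_zero.mpr hy1)]
      exact hc
    · rintro ⟨i, k, hiS, hkS, hik, hfik, rfl⟩
      have hi1 : i ≠ z1 := ((hmemS i).1 hiS).1
      have hk1 : k ≠ z1 := ((hmemS k).1 hkS).1
      have hkey : (σ i - a) * (k - z1) = (σ k - a) * (i - z1) :=
        (div_eq_div_iff (sub_ne_zero.mpr hi1) (sub_ne_zero.mpr hk1)).mp hfik
      refine ⟨card_pair hik, ?_, ?_⟩
      · simp [Ne.symm hi1, Ne.symm hk1]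
      · intro u hu v hv
        rw [ha1]
        simp only [mem_insert, mem_singleton] at hu hv
        rcases hu with rfl | rfl <;> rcases hv with rfl | rfl
        · rfl
        · exact hkey
        · exact hkey.symm
        · rfl
  -- extract the unique triple
  obtain ⟨s0, hs0⟩ := card_eq_one.mp hlone
  have hs0mem : s0 ∈ triplesThrough σ z1 := hs0 ▸ mem_singleton_self s0
  obtain ⟨i0, k0, hi0S, hk0S, hi0k0, hfik, hs0eq⟩ := (htr s0).mp hs0mem
  have hpair : ∀ i ∈ S, ∀ k ∈ S, i ≠ k → f i = f k →
      (i = i0 ∨ i = k0) ∧ (k = i0 ∨ k = k0) := by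
    intro i hi k hk hik hfi
    have hmem : ({i, k} : Finset F) ∈ triplesThrough σ z1 :=
      (htr _).mpr ⟨i, k, hi, hk, hik, hfi, rfl⟩
    rw [hs0, mem_singleton] at hmem
    have heq : ({i, k} : Finset F) = {i0, k0} := by rw [hmem, hs0eq]
    constructor
    · have : i ∈ ({i0, k0} : Finset F) := heq ▸ (by simp : i ∈ ({i, k} : Finset F))
      simpa using this
    · have : k ∈ ({i0, k0} : Finset F) := heq ▸ (by simp : k ∈ ({i, k} : Finset F))
      simpa using this
  set m : F := f i0 with hmdef
  have hm0 : m ≠ 0 := hf_ne i0 hi0S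
  set S' : Finset F := S.erase k0 with hS'def
  have hi0S' : i0 ∈ S' := mem_erase.mpr ⟨hi0k0, hi0S⟩
  have hinjS' : ∀ x ∈ S', ∀ y ∈ S', f x = f y → x = y := by
    intro x hx y hy hfxy
    by_contra hne
    obtain ⟨hx', hy'⟩ := hpair x (mem_of_mem_erase hx) y (mem_of_mem_erase hy) hne hfxy
    have hxk : x ≠ k0 := (mem_erase.mp hx).1
    have hyk : y ≠ k0 := (mem_erase.mp hy).1
    rcases hx' with rfl | h; swap; · exact hxk h
    rcases hy' with rfl | h; · exact hne rfl
    · exact hyk h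
  -- cardinalities
  have hz12 : ({z1, z2} : Finset F).card = 2 := card_pair hz
  have hcardS : S.card = Fintype.card F - 2 := by
    rw [hSdef, card_sdiff_of_subset (subset_univ _), hz12, card_univ]
  have hcardS' : S'.card = Fintype.card F - 3 := by
    rw [hS'def, card_erase_of_mem hk0S, hcardS]
    omega
  have hq4 : 4 ≤ Fintype.card F := by
    have h1 : i0 ≠ z1 := ((hmemS i0).1 hi0S).1
    have h2 : i0 ≠ z2 := ((hmemS i0).1 hi0S).2
    have h3 : k0 ≠ z1 := ((hmemS k0).1 hk0S).1
    have h4 : k0 ≠ z2 := ((hmemS k0).1 hk0S).2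
    have : ({i0, k0, z1, z2} : Finset F).card = 4 := by
      rw [card_insert_of_notMem (by simp [hi0k0, h1, h2]),
        card_insert_of_notMem (by simp [h3, h4]), card_pair hz]
    calc 4 = ({i0, k0, z1, z2} : Finset F).card := this.symm
      _ ≤ (univ : Finset F).card := card_le_card (subset_univ _)
      _ = Fintype.card F := card_univ
  set T : Finset F := S'.image f with hTdef
  have hcardT : T.card = Fintype.card F - 3 := by
    rw [hTdef, card_image_of_injOn hinjS', hcardS']
  set U : Finset F := univ \ {(0 : F)} with hUdef
  have hcardU : U.card = Fintype.card F - 1 := by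
    rw [hUdef, card_sdiff_of_subset (subset_univ _), card_singleton, card_univ]
  have hTU : T ⊆ U := by
    intro t ht
    obtain ⟨i, hi, rfl⟩ := mem_image.mp ht
    simp only [hUdef, mem_sdiff, mem_univ, true_and, mem_singleton]
    exact hf_ne i (mem_of_mem_erase hi)
  have hUT2 : (U \ T).card = 2 := by
    rw [card_sdiff_of_subset hTU, hcardU, hcardT]
    omega
  obtain ⟨mp1, mp2, hmpne, hUTeq⟩ := card_eq_two.mp hUT2
  have hmp1U : mp1 ∈ U \ T := hUTeq ▸ (by simp)
  have hmp2U : mp2 ∈ U \ T := hUTeq ▸ (by simp)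
  have hmp1_0 : mp1 ≠ 0 := by
    have := (mem_sdiff.mp hmp1U).1
    simp only [hUdef, mem_sdiff, mem_univ, true_and, mem_singleton] at this
    exact this
  have hmp2_0 : mp2 ≠ 0 := by
    have := (mem_sdiff.mp hmp2U).1
    simp only [hUdef, mem_sdiff, mem_univ, true_and, mem_singleton] at this
    exact this
  have hmp1T : mp1 ∉ T := (mem_sdiff.mp hmp1U).2
  have hmp2T : mp2 ∉ T := (mem_sdiff.mp hmp2U).2
  have hmT : m ∈ T := mem_image.mpr ⟨i0, hi0S', rfl⟩
  have hmmp1 : m ≠ mp1 := fun h => hmp1T (h ▸ hmT)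
  have hmmp2 : m ≠ mp2 := fun h => hmp2T (h ▸ hmT)
  have hfk0 : f k0 = m := hfik.symm
  -- lineCount at m is 3
  have hline3 : lineCount σ (z1, a) m = 3 := by
    rw [hline m hm0]
    have : S.filter (fun i => f i = m) = {i0, k0} := by
      ext j
      simp only [mem_filter, mem_insert, mem_singleton]
      constructor
      · rintro ⟨hjS, hjf⟩
        by_cases hj : j = i0
        · exact Or.inl hj
        · exact (hpair j hjS i0 hi0S hj (hjf.trans hmdef)).1
      · rintro (rfl | rfl)
        · exact ⟨hi0S, rfl⟩
        · exact ⟨hk0S, hfk0⟩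
    rw [this, card_pair hi0k0]
  -- lineCount at mp1, mp2 is 1
  have hline1 : ∀ mp : F, mp ∈ U \ T → lineCount σ (z1, a) mp = 1 := by
    intro mp hmp
    have hmpT : mp ∉ T := (mem_sdiff.mp hmp).2
    have hmp0 : mp ≠ 0 := by
      have := (mem_sdiff.mp hmp).1
      simp only [hUdef, mem_sdiff, mem_univ, true_and, mem_singleton] at this
      exact this
    rw [hline mp hmp0]
    have : S.filter (fun i => f i = mp) = ∅ := by
      rw [filter_eq_empty_iff]
      intro j hjS hjf
      by_cases hj : j = k0
      · subst hj
        rw [hfk0] at hjf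
        exact hmpT (hjf ▸ hmT)
      · exact hmpT (hjf ▸ mem_image.mpr ⟨j, mem_erase.mpr ⟨hj, hjS⟩, rfl⟩)
    rw [this, card_empty]
  -- lineCount at other slopes is 2
  have hline2 : ∀ m' : F, m' ≠ 0 → m' ≠ m → m' ≠ mp1 → m' ≠ mp2 →
      lineCount σ (z1, a) m' = 2 := by
    intro m' h0 hm hp1 hp2
    have hm'T : m' ∈ T := by
      by_contra hT
      have : m' ∈ U \ T := mem_sdiff.mpr ⟨by simp [hUdef, h0], hT⟩
      rw [hUTeq] at this
      rcases mem_insert.mp this with h | h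
      · exact hp1 h
      · exact hp2 (mem_singleton.mp h)
    obtain ⟨j, hjS', hjf⟩ := mem_image.mp hm'T
    rw [hline m' h0]
    have : S.filter (fun i => f i = m') = {j} := by
      ext j'
      simp only [mem_filter, mem_singleton]
      constructor
      · rintro ⟨hj'S, hj'f⟩
        by_cases hjk : j' = k0
        · exfalso; subst hjk; rw [hfk0] at hj'f; exact hm hj'f.symm
        · exact hinjS' j' (mem_erase.mpr ⟨hjk, hj'S⟩) j hjS' (hj'f.trans hjf.symm)
      · rintro rfl
        exact ⟨mem_of_mem_erase hjS', hjf⟩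
    rw [this, card_singleton]
  -- the product identity
  have hinjσS : ∀ x ∈ S, ∀ y ∈ S, σ x = σ y → x = y := by
    intro x hx y hy hxy
    rcases hinj x y hxy with h | h
    · exact h
    · exfalso
      have : x ∈ ({z1, z2} : Set F) := h ▸ (by simp : x ∈ ({x, y} : Set F))
      rw [hmemS] at hx
      rcases this with h' | h'
      · exact hx.1 h'
      · exact hx.2 h'
  have himgσ : S.image σ = univ \ {a, b} := by
    apply eq_of_subset_of_card_le
    · intro t ht
      obtain ⟨i, hi, rfl⟩ := mem_image.mp ht
      rw [hmemS] at hi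
      simp only [mem_sdiff, mem_univ, true_and, mem_insert, mem_singleton, not_or]
      exact ⟨hσa i hi.1 hi.2, fun h => hb ⟨i, h⟩⟩
    · rw [card_image_of_injOn (fun x hx y hy h => hinjσS x hx y hy h),
        card_sdiff_of_subset (subset_univ _), card_pair hab, card_univ, hcardS]
  have prodB : ∏ i ∈ S, (σ i - a) = -(b - a)⁻¹ := by
    have : ∏ i ∈ S, (σ i - a) = ∏ c ∈ S.image σ, (c - a) :=
      (Finset.prod_image (f := fun c => c - a) hinjσS).symm
    rw [this, himgσ]
    exact aux_prod a b (Ne.symm hab)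
  have prodA : ∏ i ∈ S, (i - z1) = -(z2 - z1)⁻¹ := by
    have : ∏ i ∈ S, (i - z1) = ∏ i ∈ univ \ {z1, z2}, (i - z1) := by rw [hSdef]
    rw [this]
    exact aux_prod z1 z2 (Ne.symm hz)
  have prodf : ∏ i ∈ S, f i = (b - a)⁻¹ * (z2 - z1) := by
    have h1 : ∏ i ∈ S, f i = (∏ i ∈ S, (σ i - a)) / (∏ i ∈ S, (i - z1)) := by
      rw [hfdef, Finset.prod_div_distrib]
    have hab' : a - b ≠ 0 := sub_ne_zero.mpr hab
    rw [h1, prodB, prodA]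
    field_simp
  -- product over the image side
  have hT' : T = U \ {mp1, mp2} := by
    rw [← hUTeq, Finset.sdiff_sdiff_eq_self hTU]
  have prodT : (∏ t ∈ T, t) * mp2 * mp1 = -1 := by
    have e1 : U \ {mp1, mp2} = (U.erase mp1).erase mp2 := by
      ext x
      simp only [mem_sdiff, mem_insert, mem_singleton, not_or, mem_erase]
      tauto
    have hmp1U' : mp1 ∈ U := (mem_sdiff.mp hmp1U).1
    have hmp2U' : mp2 ∈ U.erase mp1 := mem_erase.mpr ⟨Ne.symm hmpne, (mem_sdiff.mp hmp2U).1⟩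
    have h2 := Finset.prod_erase_mul (U.erase mp1) id hmp2U'
    have h3 := Finset.prod_erase_mul U id hmp1U'
    simp only [id_eq] at h2 h3
    rw [hT', e1, h2, h3, hUdef, prod_nonzero_eq_neg_one]
  have prodS' : ∏ i ∈ S', f i = ∏ t ∈ T, t := by
    rw [hTdef, Finset.prod_image hinjS']
  have hsplit : ∏ i ∈ S, f i = f k0 * ∏ i ∈ S', f i := by
    rw [hS'def]
    exact (Finset.mul_prod_erase S f hk0S).symm
  have key : mp1 * mp2 * (z2 - z1) = m * (a - b) := by
    have h1 : m * ∏ t ∈ T, t = (b - a)⁻¹ * (z2 - z1) := by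
      rw [← prodS', ← hfk0, ← hsplit, prodf]
    have h3 : (b - a) * (m * ∏ t ∈ T, t) = z2 - z1 := by
      rw [h1]
      field_simp
    calc mp1 * mp2 * (z2 - z1) = (b - a) * (m * ∏ t ∈ T, t) * (mp1 * mp2) := by
          rw [h3]; ring
      _ = (b - a) * m * ((∏ t ∈ T, t) * mp2 * mp1) := by ring
      _ = m * (a - b) := by rw [prodT]; ring
  refine ⟨m, mp1, mp2, hm0, hmp1_0, hmp2_0, hmpne, hline3, hline1 mp1 hmp1U,
    hline1 mp2 hmp2U, hline2, ?_⟩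
  rw [eq_div_iff hz']
  linear_combination key
end
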